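/- arXiv:1102.2551 — 8 statements merged into one kernel-verified Lean document; each statement's English description precedes it below -/
import Mathlib

section
/- Let r : [0,1] → ℝ be concave, let (Ω, P) be a probability space and Q : Ω → ℝ^A an integrable random vector (A a finite set). For n = 1,…,N let s_n : ℝ^A → [0,1] and i_n : ℝ^A → [0,1]^A be measurable functions with s_n(q) + Σ_{a∈A} i_{n,a}(q) ≤ 1 for all q. Define the averaged controls s̄ = (1/N) Σ_{n=1}^N s_n and ī_a = (1/N) Σ_{n=1}^N i_{n,a}. Then s̄(q) + Σ_{a∈A} ī_a(q) ≤ 1 for all q, E[ī_a(Q)] = (1/N) Σ_{n=1}^N E[i_{n,a}(Q)] for each a ∈ A, and Σ_{n=1}^N E[ r(s_n(Q)) + Σ_{a∈A} i_{n,a}(Q)·Q_a ] ≤ N · E[ r(s̄(Q)) + Σ_{a∈A} ī_a(Q)·Q_a ]. -/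
/-!
Feasibility and the expected capacity usage are linear in the controls, and so is the term
`∑ₐ iₐ(q) qₐ` of the objective. For the concave term, Jensen's inequality gives
`∑ₙ r (sₙ q) ≤ N r (s̄ q)` pointwise. This may be integrated since `r ∘ s̄ ∘ Q` is integrable: a
concave function on a compact interval is bounded, and continuous on its interior, hence Borel
measurable on the closed interval.
-/

open Set MeasureTheory Finset

section Averaging

variable {ι : Type*} [Fintype ι]

lemma card_mul_one_div_card_mul_sum (x : ι → ℝ) :
    (Fintype.card ι : ℝ) * (1 / Fintype.card ι * ∑ n, x n) = ∑ n, x n := by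
  cases isEmpty_or_nonempty ι
  · simp
  · rw [← mul_assoc, mul_one_div_cancel (Nat.cast_ne_zero.2 Fintype.card_ne_zero), one_mul]

lemma one_div_card_mul_sum_le_one {x : ι → ℝ} (hx : ∀ n, x n ≤ 1) :
    1 / Fintype.card ι * ∑ n, x n ≤ 1 := by
  rw [one_div_mul_eq_div]
  refine div_le_one_of_le₀ ?_ (Nat.cast_nonneg _)
  simpa using Finset.sum_le_card_nsmul univ x 1 fun n _ => hx n

lemma one_div_card_mul_sum_mem_Icc {x : ι → ℝ} (hx : ∀ n, x n ∈ Icc (0 : ℝ) 1) :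
    1 / Fintype.card ι * ∑ n, x n ∈ Icc (0 : ℝ) 1 :=
  ⟨mul_nonneg (by positivity) (sum_nonneg fun n _ => (hx n).1),
    one_div_card_mul_sum_le_one fun n => (hx n).2⟩

lemma one_div_card_mul_sum_add_sum_le_one {A : Type*} [Fintype A] {s : ι → ℝ} {i : ι → A → ℝ}
    (h : ∀ n, s n + ∑ a, i n a ≤ 1) :
    1 / Fintype.card ι * ∑ n, s n + ∑ a, 1 / Fintype.card ι * ∑ n, i n a ≤ 1 := by
  calc _ = 1 / Fintype.card ι * ∑ n, (s n + ∑ a, i n a) := by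
          rw [sum_add_distrib, mul_add, ← mul_sum, sum_comm]
    _ ≤ 1 := one_div_card_mul_sum_le_one h

lemma sum_sum_mul_eq_card_mul_sum {A : Type*} [Fintype A] (i : ι → A → ℝ) (q : A → ℝ) :
    ∑ n, ∑ a, i n a * q a = Fintype.card ι * ∑ a, (1 / Fintype.card ι * ∑ n, i n a) * q a := by
  rw [mul_sum, sum_comm]
  refine sum_congr rfl fun a _ => ?_
  rw [← mul_assoc, card_mul_one_div_card_mul_sum, sum_mul]

lemma ConcaveOn.sum_le_card_mul_map_average {D : Set ℝ} {f : ℝ → ℝ} (hf : ConcaveOn ℝ D f)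
    {x : ι → ℝ} (hx : ∀ n, x n ∈ D) :
    ∑ n, f (x n) ≤ Fintype.card ι * f (1 / Fintype.card ι * ∑ n, x n) := by
  cases isEmpty_or_nonempty ι
  · simp
  have hjensen := hf.le_map_sum (t := univ) (w := fun _ => 1 / (Fintype.card ι : ℝ)) (p := x)
    (fun _ _ => by positivity) (by simp) fun n _ => hx n
  simp only [smul_eq_mul, ← mul_sum] at hjensen
  calc ∑ n, f (x n) = Fintype.card ι * (1 / Fintype.card ι * ∑ n, f (x n)) :=
        (card_mul_one_div_card_mul_sum _).symm
    _ ≤ _ := by gcongr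

lemma ConcaveOn.sum_add_sum_mul_le_card_mul_average {A : Type*} [Fintype A] {D : Set ℝ}
    {r : ℝ → ℝ} (hr : ConcaveOn ℝ D r) {s : ι → ℝ} (hs : ∀ n, s n ∈ D) (i : ι → A → ℝ)
    (q : A → ℝ) :
    ∑ n, (r (s n) + ∑ a, i n a * q a) ≤ Fintype.card ι *
      (r (1 / Fintype.card ι * ∑ n, s n) + ∑ a, (1 / Fintype.card ι * ∑ n, i n a) * q a) := by
  rw [sum_add_distrib, mul_add, sum_sum_mul_eq_card_mul_sum]
  gcongr
  exact hr.sum_le_card_mul_map_average hs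

end Averaging

lemma measurable_domRestrict_Icc_of_continuousOn_Ioo {r : ℝ → ℝ} {a b : ℝ}
    (hr : ContinuousOn r (Ioo a b)) : Measurable ((Icc a b).domRestrict r) := by
  refine measurable_of_measurable_on_compl_finite (Subtype.val ⁻¹' {a, b})
    ((toFinite _).preimage Subtype.val_injective.injOn) ?_
  refine (hr.comp_continuous (by fun_prop) fun x => ?_).measurable
  obtain ⟨⟨x, hx⟩, hxab⟩ := x
  simp only [mem_compl_iff, Set.mem_preimage, mem_insert_iff, mem_singleton_iff, not_or] at hxab
  exact ⟨lt_of_le_of_ne hx.1 (Ne.symm hxab.1), lt_of_le_of_ne hx.2 hxab.2⟩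

namespace ConcaveOn

variable {r : ℝ → ℝ} {a b : ℝ}

lemma bddBelow_image_Icc (hr : ConcaveOn ℝ (Icc a b) r) : BddBelow (r '' Icc a b) :=
  ⟨min (r a) (r b), forall_mem_image.2 fun _ hx =>
    hr.min_le_of_mem_Icc (left_mem_Icc.2 (hx.1.trans hx.2)) (right_mem_Icc.2 (hx.1.trans hx.2)) hx⟩

lemma bddAbove_image_Icc (hr : ConcaveOn ℝ (Icc a b) r) : BddAbove (r '' Icc a b) := by
  obtain ⟨m, hm⟩ := hr.bddBelow_image_Icc
  refine ⟨2 * r ((a + b) / 2) - m, forall_mem_image.2 fun x hx => ?_⟩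
  have hx' : a + b - x ∈ Icc a b := ⟨by linarith [hx.2], by linarith [hx.1]⟩
  have hmid := hr.2 hx hx' (by norm_num : (0 : ℝ) ≤ 1 / 2) (by norm_num : (0 : ℝ) ≤ 1 / 2)
    (by norm_num)
  have hmidpoint : (1 / 2 : ℝ) • x + (1 / 2 : ℝ) • (a + b - x) = (a + b) / 2 := by
    simp only [smul_eq_mul]; ring
  rw [hmidpoint, smul_eq_mul, smul_eq_mul] at hmid
  linarith [hm (mem_image_of_mem r hx')]

variable {Ω : Type*} [MeasurableSpace Ω] {f : Ω → ℝ}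

lemma measurable_comp (hr : ConcaveOn ℝ (Icc a b) r) (hf : Measurable f)
    (hfab : ∀ ω, f ω ∈ Icc a b) : Measurable fun ω => r (f ω) := by
  have hrc : ContinuousOn r (Ioo a b) := by simpa using hr.continuousOn_interior
  exact (measurable_domRestrict_Icc_of_continuousOn_Ioo hrc).comp (hf.subtype_mk (h := hfab))

lemma integrable_comp (μ : Measure Ω) [IsFiniteMeasure μ] (hr : ConcaveOn ℝ (Icc a b) r)
    (hf : Measurable f) (hfab : ∀ ω, f ω ∈ Icc a b) : Integrable (fun ω => r (f ω)) μ := by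
  obtain ⟨m, hm⟩ := hr.bddBelow_image_Icc
  obtain ⟨M, hM⟩ := hr.bddAbove_image_Icc
  refine Integrable.of_mem_Icc m M (hr.measurable_comp hf hfab).aemeasurable
    (ae_of_all _ fun ω => ?_)
  exact ⟨hm (mem_image_of_mem r (hfab ω)), hM (mem_image_of_mem r (hfab ω))⟩

end ConcaveOn

lemma MeasureTheory.Integrable.mul_of_mem_Icc {Ω : Type*} [MeasurableSpace Ω] {μ : Measure Ω}
    {g u : Ω → ℝ} (hg : Integrable g μ) (hu : Measurable u) (hu01 : ∀ ω, u ω ∈ Icc (0 : ℝ) 1) :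
    Integrable (fun ω => u ω * g ω) μ :=
  hg.bdd_mul hu.aestronglyMeasurable (c := 1) <| ae_of_all _ fun ω => by
    rw [Real.norm_eq_abs, abs_le]
    exact ⟨by linarith [(hu01 ω).1], (hu01 ω).2⟩

theorem stmt_4_general {Ω : Type*} [MeasurableSpace Ω] (μ : Measure Ω) [IsProbabilityMeasure μ]
    {A : Type*} [Fintype A]
    (r : ℝ → ℝ) (hr_conc : ConcaveOn ℝ (Icc 0 1) r)
    (Q : Ω → A → ℝ) (hQmeas : Measurable Q)
    (hQint : ∀ a : A, Integrable (fun ω => Q ω a) μ)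
    (N : ℕ)
    (s : Fin N → (A → ℝ) → ℝ) (i : Fin N → A → (A → ℝ) → ℝ)
    (hsmeas : ∀ n, Measurable (s n)) (himeas : ∀ n a, Measurable (i n a))
    (hs01 : ∀ n q, s n q ∈ Icc (0:ℝ) 1)
    (hi01 : ∀ n a q, i n a q ∈ Icc (0:ℝ) 1)
    (hfeas : ∀ n q, s n q + ∑ a : A, i n a q ≤ 1) :
    (∀ q : A → ℝ,
        (1 / (N:ℝ)) * ∑ n : Fin N, s n q + ∑ a : A, (1 / (N:ℝ)) * ∑ n : Fin N, i n a q ≤ 1) ∧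
    (∀ a : A,
        ∫ ω, (1 / (N:ℝ)) * ∑ n : Fin N, i n a (Q ω) ∂μ
          = (1 / (N:ℝ)) * ∑ n : Fin N, ∫ ω, i n a (Q ω) ∂μ) ∧
    (∑ n : Fin N, ∫ ω, (r (s n (Q ω)) + ∑ a : A, i n a (Q ω) * Q ω a) ∂μ
        ≤ (N:ℝ) * ∫ ω, (r ((1 / (N:ℝ)) * ∑ n : Fin N, s n (Q ω))
            + ∑ a : A, ((1 / (N:ℝ)) * ∑ n : Fin N, i n a (Q ω)) * Q ω a) ∂μ) := by
  have hsQ (n) : Measurable fun ω => s n (Q ω) := (hsmeas n).comp hQmeas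
  have hiQ (n a) : Measurable fun ω => i n a (Q ω) := (himeas n a).comp hQmeas
  have hmean {x : Fin N → Ω → ℝ} (hx : ∀ n, Measurable (x n))
      (hx01 : ∀ n ω, x n ω ∈ Icc (0 : ℝ) 1) :
      Measurable (fun ω => 1 / (N : ℝ) * ∑ n, x n ω) ∧
        ∀ ω, 1 / (N : ℝ) * ∑ n, x n ω ∈ Icc (0 : ℝ) 1 :=
    ⟨by fun_prop, fun ω => by simpa only [Fintype.card_fin] using
      one_div_card_mul_sum_mem_Icc fun n => hx01 n ω⟩
  obtain ⟨hs_mean, hs_mean01⟩ := hmean hsQ fun n ω => hs01 n _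
  have hi_mean (a) := hmean (hiQ · a) fun n ω => hi01 n a _
  refine ⟨fun q => ?_, fun a => ?_, ?_⟩
  · simpa only [Fintype.card_fin] using one_div_card_mul_sum_add_sum_le_one (hfeas · q)
  · rw [integral_const_mul, integral_finsetSum _ fun n _ =>
      Integrable.of_mem_Icc 0 1 (hiQ n a).aemeasurable (ae_of_all _ fun ω => hi01 n a _)]
  have hobj (n) : Integrable (fun ω => r (s n (Q ω)) + ∑ a, i n a (Q ω) * Q ω a) μ :=
    (hr_conc.integrable_comp μ (hsQ n) fun ω => hs01 n _).add <|
      integrable_finsetSum _ fun a _ => (hQint a).mul_of_mem_Icc (hiQ n a) fun ω => hi01 n a _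
  have hobj_mean : Integrable (fun ω => r (1 / (N : ℝ) * ∑ n, s n (Q ω))
      + ∑ a, (1 / (N : ℝ) * ∑ n, i n a (Q ω)) * Q ω a) μ :=
    (hr_conc.integrable_comp μ hs_mean hs_mean01).add <|
      integrable_finsetSum _ fun a _ => (hQint a).mul_of_mem_Icc (hi_mean a).1 (hi_mean a).2
  calc _ = ∫ ω, ∑ n, (r (s n (Q ω)) + ∑ a, i n a (Q ω) * Q ω a) ∂μ :=
        (integral_finsetSum _ fun n _ => hobj n).symm
    _ ≤ ∫ ω, (N : ℝ) * (r (1 / (N : ℝ) * ∑ n, s n (Q ω))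
          + ∑ a, (1 / (N : ℝ) * ∑ n, i n a (Q ω)) * Q ω a) ∂μ :=
        integral_mono (integrable_finsetSum _ fun n _ => hobj n) (hobj_mean.const_mul _)
          fun ω => by
            simpa only [Fintype.card_fin] using hr_conc.sum_add_sum_mul_le_card_mul_average
              (fun n => hs01 n (Q ω)) (fun n a => i n a (Q ω)) (Q ω)
    _ = _ := integral_const_mul _ _

/-- Averaging per-impression controls preserves feasibility, preserves the
expected capacity usage, and weakly increases the (concave) objective of the deterministic
approximation problem. -/
theorem stmt_4 {Ω : Type*} [MeasurableSpace Ω] (μ : Measure Ω) [IsProbabilityMeasure μ]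
    {A : Type*} [Fintype A]
    (r : ℝ → ℝ) (hr_conc : ConcaveOn ℝ (Icc 0 1) r)
    (Q : Ω → A → ℝ) (hQmeas : Measurable Q)
    (hQint : ∀ a : A, Integrable (fun ω => Q ω a) μ)
    (N : ℕ) (hN : 0 < N)
    (s : Fin N → (A → ℝ) → ℝ) (i : Fin N → A → (A → ℝ) → ℝ)
    (hsmeas : ∀ n, Measurable (s n)) (himeas : ∀ n a, Measurable (i n a))
    (hs01 : ∀ n q, s n q ∈ Icc (0:ℝ) 1)
    (hi01 : ∀ n a q, i n a q ∈ Icc (0:ℝ) 1)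
    (hfeas : ∀ n q, s n q + ∑ a : A, i n a q ≤ 1) :
    (∀ q : A → ℝ,
        (1 / (N:ℝ)) * ∑ n : Fin N, s n q + ∑ a : A, (1 / (N:ℝ)) * ∑ n : Fin N, i n a q ≤ 1) ∧
    (∀ a : A,
        ∫ ω, (1 / (N:ℝ)) * ∑ n : Fin N, i n a (Q ω) ∂μ
          = (1 / (N:ℝ)) * ∑ n : Fin N, ∫ ω, i n a (Q ω) ∂μ) ∧
    (∑ n : Fin N, ∫ ω, (r (s n (Q ω)) + ∑ a : A, i n a (Q ω) * Q ω a) ∂μ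
        ≤ (N:ℝ) * ∫ ω, (r ((1 / (N:ℝ)) * ∑ n : Fin N, s n (Q ω))
            + ∑ a : A, ((1 / (N:ℝ)) * ∑ n : Fin N, i n a (Q ω)) * Q ω a) ∂μ) :=
  stmt_4_general μ r hr_conc Q hQmeas hQint N s i hsmeas himeas hs01 hi01 hfeas
end

section
/- Let r : [0,1] → ℝ be a regular revenue function with value function R(c) = max_{s∈[0,1]}(r(s) + (1−s)c). Let Q : Ω → ℝ^A be an integrable random vector on a probability space, extended by Q_0 ≡ 0, let ρ_a ∈ (0,1) for a in the finite set A, and let v ∈ ℝ^A be extended by v_0 = 0. Then for every measurable pair s : Ω → [0,1], i : Ω → [0,1]^A with s + Σ_{a∈A} i_a ≤ 1 almost surely and E[i_a] = ρ_a for every a ∈ A, one has E[ r(s) + Σ_{a∈A} i_a · Q_a ] ≤ E[ R( max_{a∈A₀} (Q_a − v_a) ) ] + Σ_{a∈A} v_a ρ_a, where A₀ = {0} ∪ A. -/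
/-!
For every outcome `ω`, write `c = max_{a ∈ A₀} (Q_a - v_a) ≥ 0`. Since `i_a (Q_a - v_a) ≤ i_a c`
and `Σ_a i_a ≤ 1 - s`, the primal integrand is pointwise at most
`r(s) + (1 - s) c + Σ_a v_a i_a ≤ R(c) + Σ_a v_a i_a`. Integrating and using `E[i_a] = ρ_a`
gives the bound; the only analytic work is integrability, which comes from `r` being bounded
on `[0, 1]` by compactness and `R` growing at most linearly.
-/

open Set MeasureTheory

def IsValueFunction (r R : ℝ → ℝ) : Prop :=
  ∀ c : ℝ, IsGreatest ((fun u => r u + (1 - u) * c) '' Icc (0:ℝ) 1) (R c)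

namespace IsValueFunction

variable {r R : ℝ → ℝ}

theorem add_mul_le (hR : IsValueFunction r R) {u : ℝ} (hu : u ∈ Icc (0:ℝ) 1) (c : ℝ) :
    r u + (1 - u) * c ≤ R c :=
  (hR c).2 ⟨u, hu, rfl⟩

theorem monotone (hR : IsValueFunction r R) : Monotone R := by
  intro c d hcd
  obtain ⟨u, hu, hRc⟩ := (hR c).1
  calc R c = r u + (1 - u) * c := hRc.symm
    _ ≤ r u + (1 - u) * d := by nlinarith [hu.2]
    _ ≤ R d := hR.add_mul_le hu d

theorem abs_apply_le (hR : IsValueFunction r R) {K : ℝ} (hK : ∀ u ∈ Icc (0:ℝ) 1, |r u| ≤ K)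
    (c : ℝ) : |R c| ≤ K + |c| := by
  have hlower : r 1 ≤ R c := by
    simpa using hR.add_mul_le (right_mem_Icc.2 zero_le_one) c
  obtain ⟨u, hu, hRc⟩ := (hR c).1
  have hupper : (1 - u) * c ≤ |c| :=
    calc (1 - u) * c ≤ (1 - u) * |c| := by nlinarith [hu.2, le_abs_self c]
      _ ≤ |c| := by nlinarith [hu.1, abs_nonneg c]
  have hr1 := abs_le.1 (hK 1 (right_mem_Icc.2 zero_le_one))
  have hru := abs_le.1 (hK u hu)
  rw [abs_le]
  constructor <;> linarith [abs_nonneg c]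

theorem integrable_comp {Ω : Type*} [MeasurableSpace Ω] {μ : Measure Ω} [IsFiniteMeasure μ]
    (hR : IsValueFunction r R) {K : ℝ} (hK : ∀ u ∈ Icc (0:ℝ) 1, |r u| ≤ K) {f : Ω → ℝ}
    (hf : Integrable f μ) : Integrable (fun ω => R (f ω)) μ := by
  refine Integrable.mono' ((integrable_const K).add hf.abs)
    (hR.monotone.measurable.comp_aemeasurable hf.aemeasurable).aestronglyMeasurable ?_
  exact ae_of_all _ fun ω => hR.abs_apply_le hK (f ω)

theorem add_sum_mul_le (hR : IsValueFunction r R) {A : Type*} [Fintype A] {s c : ℝ}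
    {i q v : A → ℝ} (hs : s ∈ Icc (0:ℝ) 1) (hi : ∀ a, 0 ≤ i a) (hsum : s + ∑ a, i a ≤ 1)
    (hc : 0 ≤ c) (hqc : ∀ a, q a - v a ≤ c) :
    r s + ∑ a, i a * q a ≤ R c + ∑ a, v a * i a := by
  have hterm : ∀ a, i a * q a ≤ i a * c + v a * i a := fun a => by
    nlinarith [hqc a, hi a]
  have hsum_le : ∑ a, i a * q a ≤ (∑ a, i a) * c + ∑ a, v a * i a := by
    rw [Finset.sum_mul, ← Finset.sum_add_distrib]
    exact Finset.sum_le_sum fun a _ => hterm a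
  have hmass : (∑ a, i a) * c ≤ (1 - s) * c := by nlinarith
  linarith [hR.add_mul_le hs c]

end IsValueFunction

section MaxNetQuality

variable {A : Type*} [Fintype A]

/-- `max_{a ∈ A₀} (q a - v a)`, the extra index `0 ∈ A₀` (with `q 0 = v 0 = 0`) being `none`. -/
def maxNetQuality (q v : A → ℝ) : ℝ :=
  Finset.univ.sup' Finset.univ_nonempty (fun o : Option A => o.elim 0 (fun a => q a - v a))

theorem zero_le_maxNetQuality (q v : A → ℝ) : 0 ≤ maxNetQuality q v :=
  Finset.le_sup' (fun o : Option A => o.elim 0 (fun a => q a - v a)) (Finset.mem_univ none)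

theorem sub_le_maxNetQuality (q v : A → ℝ) (a : A) : q a - v a ≤ maxNetQuality q v :=
  Finset.le_sup' (fun o : Option A => o.elim 0 (fun a => q a - v a)) (Finset.mem_univ (some a))

end MaxNetQuality

section Integrability

variable {Ω : Type*} [MeasurableSpace Ω] {μ : Measure Ω}

theorem integrable_finset_sup' {ι : Type*} {s : Finset ι} (hs : s.Nonempty) {f : ι → Ω → ℝ}
    (hf : ∀ i ∈ s, Integrable (f i) μ) : Integrable (fun ω => s.sup' hs (fun i => f i ω)) μ := by
  simp_rw [← Finset.sup'_apply]
  exact Finset.sup'_induction (p := fun g => Integrable g μ) hs f (fun _ hg _ hh => hg.sup hh) hf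

theorem integrable_maxNetQuality [IsFiniteMeasure μ] {A : Type*} [Fintype A] {Q : Ω → A → ℝ}
    (hQ : ∀ a, Integrable (fun ω => Q ω a) μ) (v : A → ℝ) :
    Integrable (fun ω => maxNetQuality (Q ω) v) μ := by
  refine integrable_finset_sup' _ fun o _ => ?_
  cases o with
  | none => exact integrable_zero _ _ μ
  | some a => exact (hQ a).sub (integrable_const (v a))

theorem integrable_comp_of_continuousOn [IsFiniteMeasure μ] {X : Type*} [TopologicalSpace X]
    [MeasurableSpace X] [OpensMeasurableSpace X] {S : Set X} (hS : IsCompact S) {g : X → ℝ}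
    (hg : ContinuousOn g S) {f : Ω → X} (hf : Measurable f) (hfS : ∀ ω, f ω ∈ S) :
    Integrable (fun ω => g (f ω)) μ := by
  obtain ⟨K, hK⟩ := hS.exists_bound_of_continuousOn hg
  have hmeas : Measurable fun ω => S.domRestrict g ⟨f ω, hfS ω⟩ :=
    hg.domRestrict.measurable.comp (hf.subtype_mk)
  exact Integrable.of_bound hmeas.aestronglyMeasurable K (ae_of_all _ fun ω => hK _ (hfS ω))

end Integrability

theorem stmt_5_general {Ω : Type*} [MeasurableSpace Ω] (μ : Measure Ω) [IsProbabilityMeasure μ]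
    {A : Type*} [Fintype A]
    (r R : ℝ → ℝ)
    (hr_cont : ContinuousOn r (Icc 0 1))
    (hR : ∀ c : ℝ, IsGreatest ((fun u => r u + (1 - u) * c) '' Icc (0:ℝ) 1) (R c))
    (Q : Ω → A → ℝ)
    (hQint : ∀ a : A, Integrable (fun ω => Q ω a) μ)
    (ρ : A → ℝ)
    (v : A → ℝ)
    (s : Ω → ℝ) (i : A → Ω → ℝ)
    (hsmeas : Measurable s) (himeas : ∀ a, Measurable (i a))
    (hs01 : ∀ ω, s ω ∈ Icc (0:ℝ) 1)
    (hi01 : ∀ a ω, i a ω ∈ Icc (0:ℝ) 1)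
    (hfeas : ∀ᵐ ω ∂μ, s ω + ∑ a : A, i a ω ≤ 1)
    (hcap : ∀ a, ∫ ω, i a ω ∂μ = ρ a) :
    ∫ ω, (r (s ω) + ∑ a : A, i a ω * Q ω a) ∂μ
      ≤ (∫ ω, R (Finset.univ.sup' Finset.univ_nonempty
            (fun o : Option A => o.elim 0 (fun a => Q ω a - v a))) ∂μ)
        + ∑ a : A, v a * ρ a := by
  obtain ⟨K, hK⟩ := isCompact_Icc.exists_bound_of_continuousOn hr_cont
  have hi_int : ∀ a, Integrable (i a) μ := fun a =>
    integrable_comp_of_continuousOn isCompact_Icc continuousOn_id (himeas a) (hi01 a)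
  have hvi_int : Integrable (fun ω => ∑ a, v a * i a ω) μ :=
    integrable_finsetSum _ fun a _ => (hi_int a).const_mul (v a)
  have hRc_int : Integrable (fun ω => R (maxNetQuality (Q ω) v)) μ :=
    IsValueFunction.integrable_comp hR hK (integrable_maxNetQuality hQint v)
  have hprimal_int : Integrable (fun ω => r (s ω) + ∑ a, i a ω * Q ω a) μ :=
    (integrable_comp_of_continuousOn isCompact_Icc hr_cont hsmeas hs01).add
      (integrable_finsetSum _ fun a _ => (hQint a).bdd_mul (himeas a).aestronglyMeasurable
        (ae_of_all _ fun ω => by simpa [abs_of_nonneg (hi01 a ω).1] using (hi01 a ω).2))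
  calc ∫ ω, (r (s ω) + ∑ a, i a ω * Q ω a) ∂μ
      ≤ ∫ ω, (R (maxNetQuality (Q ω) v) + ∑ a, v a * i a ω) ∂μ := by
        refine integral_mono_ae hprimal_int (hRc_int.add hvi_int) ?_
        filter_upwards [hfeas] with ω hω
        exact IsValueFunction.add_sum_mul_le hR (hs01 ω) (fun a => (hi01 a ω).1) hω
          (zero_le_maxNetQuality _ v) (sub_le_maxNetQuality (Q ω) v)
    _ = (∫ ω, R (maxNetQuality (Q ω) v) ∂μ) + ∑ a, v a * ρ a := by
        rw [integral_add hRc_int hvi_int,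
          integral_finsetSum _ fun a _ => (hi_int a).const_mul (v a)]
        simp only [integral_const_mul, hcap]

/-- Weak duality for the deterministic approximation problem: any feasible
control pair `(s, i)` satisfying the capacity constraints `E[i_a] = ρ_a` has objective value
at most the Lagrangian dual objective `E[R(max_{a ∈ A₀} (Q_a - v_a))] + Σ_a v_a ρ_a`,
where `A₀ = {0} ∪ A` with `Q_0 ≡ 0` and `v_0 = 0`. -/
theorem stmt_5 {Ω : Type*} [MeasurableSpace Ω] (μ : Measure Ω) [IsProbabilityMeasure μ]
    {A : Type*} [Fintype A]
    (r R : ℝ → ℝ)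
    (hr_cont : ContinuousOn r (Icc 0 1))
    (hr_conc : ConcaveOn ℝ (Icc 0 1) r)
    (hr_nonneg : ∀ u ∈ Icc (0:ℝ) 1, 0 ≤ r u)
    (hr_bdd : ∃ M : ℝ, ∀ u ∈ Icc (0:ℝ) 1, r u ≤ M)
    (hr_zero : r 0 = 0)
    (hR : ∀ c : ℝ, IsGreatest ((fun u => r u + (1 - u) * c) '' Icc (0:ℝ) 1) (R c))
    (Q : Ω → A → ℝ) (hQmeas : Measurable Q)
    (hQint : ∀ a : A, Integrable (fun ω => Q ω a) μ)
    (ρ : A → ℝ) (hρ : ∀ a, ρ a ∈ Ioo (0:ℝ) 1)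
    (v : A → ℝ)
    (s : Ω → ℝ) (i : A → Ω → ℝ)
    (hsmeas : Measurable s) (himeas : ∀ a, Measurable (i a))
    (hs01 : ∀ ω, s ω ∈ Icc (0:ℝ) 1)
    (hi01 : ∀ a ω, i a ω ∈ Icc (0:ℝ) 1)
    (hfeas : ∀ᵐ ω ∂μ, s ω + ∑ a : A, i a ω ≤ 1)
    (hcap : ∀ a, ∫ ω, i a ω ∂μ = ρ a) :
    ∫ ω, (r (s ω) + ∑ a : A, i a ω * Q ω a) ∂μ
      ≤ (∫ ω, R (Finset.univ.sup' Finset.univ_nonempty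
            (fun o : Option A => o.elim 0 (fun a => Q ω a - v a))) ∂μ)
        + ∑ a : A, v a * ρ a :=
  stmt_5_general μ r R hr_cont hR Q hQint ρ v s i hsmeas himeas hs01 hi01 hfeas hcap
end

section
/- Let r : [0,1] → ℝ be a regular revenue function such that for every c ∈ ℝ the maximizer s*(c) of s ↦ r(s)+(1−s)c over [0,1] is unique, and let R(c) = max_{s∈[0,1]}(r(s)+(1−s)c). Let Q : Ω → ℝ^A be an integrable random vector extended by Q_0 ≡ 0, ρ ∈ ℝ^A, v ∈ ℝ^A with v_0 = 0, and ψ(v) = E[R(max_{a∈A₀}(Q_a − v_a))] + Σ_{a∈A} v_a ρ_a, where A₀ = {0} ∪ A. Then for every nonempty subset α ⊆ A, the one-sided directional derivative of ψ at v in the direction 1_α exists and equals −E[ (1 − s*(max_{a∈A₀}(Q_a − v_a))) · 1{ max_{a∈α}(Q_a − v_a) > max_{a∈A₀∖α}(Q_a − v_a) } ] + Σ_{a∈α} ρ_a; i.e., (ψ(v + t·1_α) − ψ(v))/t converges to that value as t → 0⁺. -/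
/-!
`R` is the upper envelope of the affine maps `c ↦ r s + (1 - s) c`, so `1 - s*(a)` is a
subgradient of `R` at `a`. Hence `R` is 1-Lipschitz, and since the unique maximizer depends
continuously on `c` (compactness of `[0,1]`), the left derivative of `R` at `c` is `1 - s*(c)`.
Splitting the maximum over `A₀` into `N` (over `A₀ ∖ α`) and `P` (over `α`), the shift
`v ↦ v + t • 1_α` turns `max N P` into `max N (P - t)`, whose slope in `t` tends to
`-(1 - s*(max N P)) · 1{N < P}`. The Lipschitz bound makes the slopes bounded by `1`, so dominated
convergence moves the limit under the expectation; the linear term contributes `∑_{a ∈ α} ρ_a`.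
-/

open Set MeasureTheory Filter Topology

section Envelope

variable {r sstar R : ℝ → ℝ}
  (hmem : ∀ c, sstar c ∈ Icc (0:ℝ) 1)
  (hmax : ∀ c, ∀ t ∈ Icc (0:ℝ) 1, r t + (1 - t) * c ≤ r (sstar c) + (1 - sstar c) * c)
  (hR : ∀ c, R c = r (sstar c) + (1 - sstar c) * c)

include hmem hmax hR in
theorem envelope_subgradient (a b : ℝ) : (1 - sstar a) * (b - a) ≤ R b - R a := by
  have := hmax b (sstar a) (hmem a)
  rw [hR a, hR b]
  linarith

include hmem hmax hR in
theorem envelope_lipschitzWith : LipschitzWith 1 R := by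
  refine LipschitzWith.of_le_add fun x y => ?_
  rw [Real.dist_eq]
  have hsub := envelope_subgradient hmem hmax hR x y
  have hx := hmem x
  cases abs_cases (x - y) <;> nlinarith [hx.1, hx.2]

include hmem hmax in
theorem continuous_argmax (hr : ContinuousOn r (Icc 0 1))
    (huniq : ∀ c, ∀ t ∈ Icc (0:ℝ) 1,
      (∀ u ∈ Icc (0:ℝ) 1, r u + (1 - u) * c ≤ r t + (1 - t) * c) → t = sstar c) :
    Continuous sstar := by
  refine continuous_iff_continuousAt.2 fun c => ?_
  refine isCompact_Icc.tendsto_nhds_of_unique_mapClusterPt (.of_forall hmem)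
    fun x hx hcl => huniq c x hx fun u hu => ?_
  have hpair : MapClusterPt (c, x) (𝓝 c) fun c' => (c', sstar c') := by
    rw [((𝓝 c).basis_sets.prod_nhds (𝓝 x).basis_sets).mapClusterPt_iff_frequently]
    rintro ⟨U, V⟩ ⟨hU, hV⟩
    exact ((mapClusterPt_iff_frequently.1 hcl V hV).and_eventually hU).mono
      fun c' h => ⟨h.2, h.1⟩
  have hclosed : IsClosed ((univ ×ˢ Icc 0 1) ∩ (fun p : ℝ × ℝ =>
      r p.2 + (1 - p.2) * p.1 - (r u + (1 - u) * p.1)) ⁻¹' Ici 0) := by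
    refine ContinuousOn.preimage_isClosed_of_isClosed ?_ (isClosed_univ.prod isClosed_Icc)
      isClosed_Ici
    exact ((hr.comp continuousOn_snd fun p hp => hp.2).add (by fun_prop)).sub (by fun_prop)
  have hlim := hclosed.mem_of_mapClusterPt hpair
    (.of_forall fun c' => ⟨⟨trivial, hmem c'⟩, sub_nonneg.2 (hmax c' u hu)⟩)
  exact sub_nonneg.1 hlim.2

include hmem hmax hR in
theorem tendsto_envelope_slope_left (hr : ContinuousOn r (Icc 0 1))
    (huniq : ∀ c, ∀ t ∈ Icc (0:ℝ) 1,
      (∀ u ∈ Icc (0:ℝ) 1, r u + (1 - u) * c ≤ r t + (1 - t) * c) → t = sstar c) (c : ℝ) :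
    Tendsto (fun t => (R c - R (c - t)) / t) (𝓝[>] 0) (𝓝 (1 - sstar c)) := by
  have hs : Tendsto (fun t => 1 - sstar (c - t)) (𝓝[>] 0) (𝓝 (1 - sstar c)) :=
    ((continuous_const.sub ((continuous_argmax hmem hmax hr huniq).comp
      (continuous_const.sub continuous_id))).tendsto' 0 _ (by simp)).mono_left nhdsWithin_le_nhds
  refine tendsto_of_tendsto_of_tendsto_of_le_of_le' hs tendsto_const_nhds ?_ ?_ <;>
    filter_upwards [self_mem_nhdsWithin] with t (ht : 0 < t)
  · rw [le_div_iff₀ ht]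
    linarith [envelope_subgradient hmem hmax hR (c - t) c]
  · rw [div_le_iff₀ ht]
    linarith [envelope_subgradient hmem hmax hR c (c - t)]

end Envelope

theorem tendsto_slope_max_sub {R D : ℝ → ℝ}
    (hD : ∀ c, Tendsto (fun t => (R c - R (c - t)) / t) (𝓝[>] 0) (𝓝 (D c))) (x y : ℝ) :
    Tendsto (fun t => (R (max x (y - t)) - R (max x y)) / t) (𝓝[>] 0)
      (𝓝 (-(D (max x y) * if x < y then 1 else 0))) := by
  rcases lt_or_ge x y with h | h
  · rw [max_eq_right h.le, if_pos h, mul_one]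
    refine (hD y).neg.congr' ?_
    filter_upwards [Ioo_mem_nhdsGT (sub_pos.2 h)] with t ht
    rw [max_eq_right (by linarith [ht.2])]
    ring
  · rw [max_eq_left h, if_neg h.not_gt, mul_zero, neg_zero]
    refine tendsto_const_nhds.congr' ?_
    filter_upwards [self_mem_nhdsWithin] with t (ht : 0 < t)
    rw [max_eq_left (by linarith), sub_self, zero_div]

section Expectation

variable {Ω : Type*} [MeasurableSpace Ω] {μ : Measure Ω}

theorem LipschitzWith.integrable_comp [IsFiniteMeasure μ] {R : ℝ → ℝ} {K : NNReal}
    (hR : LipschitzWith K R) {f : Ω → ℝ} (hf : Integrable f μ) :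
    Integrable (fun ω => R (f ω)) μ := by
  refine ((hf.norm.const_mul K).add (integrable_const ‖R 0‖)).mono'
    (hR.continuous.comp_aestronglyMeasurable hf.1) (.of_forall fun ω => ?_)
  have hdist := hR.dist_le_mul (f ω) 0
  rw [dist_eq_norm, dist_eq_norm, sub_zero] at hdist
  simp only [Pi.add_apply]
  linarith [norm_le_insert' (R (f ω)) (R 0)]

theorem MeasureTheory.Integrable.finset_sup' {ι : Type*} {s : Finset ι} (hs : s.Nonempty)
    {f : ι → Ω → ℝ} (hf : ∀ i ∈ s, Integrable (f i) μ) :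
    Integrable (fun ω => s.sup' hs fun i => f i ω) μ := by
  simp_rw [← Finset.sup'_apply]
  exact Finset.sup'_induction (p := fun g => Integrable g μ) hs f (fun _ h₁ _ h₂ => h₁.sup h₂) hf

theorem tendsto_integral_slope_max_sub [IsFiniteMeasure μ] {R D : ℝ → ℝ}
    (hR : LipschitzWith 1 R)
    (hD : ∀ c, Tendsto (fun t => (R c - R (c - t)) / t) (𝓝[>] 0) (𝓝 (D c)))
    {N P : Ω → ℝ} (hN : Integrable N μ) (hP : Integrable P μ) :
    Tendsto (fun t => ((∫ ω, R (max (N ω) (P ω - t)) ∂μ) - ∫ ω, R (max (N ω) (P ω)) ∂μ) / t)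
      (𝓝[>] 0) (𝓝 (-∫ ω, D (max (N ω) (P ω)) * {ω | N ω < P ω}.indicator 1 ω ∂μ)) := by
  have hint : ∀ t, Integrable (fun ω => R (max (N ω) (P ω - t))) μ := fun t =>
    hR.integrable_comp (hN.sup (hP.sub (integrable_const t)))
  have hint₀ : Integrable (fun ω => R (max (N ω) (P ω))) μ := by simpa using hint 0
  have hquot : ∀ t, ((∫ ω, R (max (N ω) (P ω - t)) ∂μ) - ∫ ω, R (max (N ω) (P ω)) ∂μ) / t =
      ∫ ω, (R (max (N ω) (P ω - t)) - R (max (N ω) (P ω))) / t ∂μ := fun t => by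
    rw [integral_div, integral_sub (hint t) hint₀]
  simp_rw [hquot, ← integral_neg]
  refine tendsto_integral_filter_of_dominated_convergence (fun _ => 1)
    (.of_forall fun t => ((hint t).sub hint₀).div_const t |>.aestronglyMeasurable) ?_
    (integrable_const 1) (.of_forall fun ω => ?_)
  · filter_upwards [self_mem_nhdsWithin] with t (ht : 0 < t)
    refine .of_forall fun ω => ?_
    rw [Real.norm_eq_abs, abs_div, abs_of_pos ht, div_le_one ht]
    calc |R (max (N ω) (P ω - t)) - R (max (N ω) (P ω))|
        ≤ |max (P ω - t) (N ω) - max (P ω) (N ω)| := by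
          simpa [max_comm, Real.dist_eq] using hR.dist_le_mul _ _
      _ ≤ |P ω - t - P ω| := abs_max_sub_max_le_abs _ _ _
      _ = t := by simp [ht.le]
  · simpa [Set.indicator_apply] using tendsto_slope_max_sub hD (N ω) (P ω)

end Expectation

theorem Finset.sup'_univ_sub_ite {ι : Type*} [Fintype ι] [Nonempty ι] [DecidableEq ι]
    {β : Finset ι} (hβ : β.Nonempty) (hβc : (univ \ β).Nonempty) (f : ι → ℝ) (t : ℝ) :
    univ.sup' univ_nonempty (fun i => f i - if i ∈ β then t else 0) =
      max ((univ \ β).sup' hβc f) (β.sup' hβ f - t) := by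
  rw [sup'_congr univ_nonempty (sdiff_union_of_subset β.subset_univ).symm fun _ _ => rfl,
    sup'_union hβc hβ, sub_eq_add_neg, sup'_add]
  congr 1
  · exact sup'_congr hβc rfl fun i hi => by simp [(mem_sdiff.1 hi).2]
  · exact sup'_congr hβ rfl fun i hi => by simp [hi, sub_eq_add_neg]

theorem Finset.sup'_option_elim_sub_add_smul {A : Type*} [Fintype A] [DecidableEq A]
    {α : Finset A} (hα : α.Nonempty) (hβc : (univ \ α.image some).Nonempty) (x v : A → ℝ)
    (t : ℝ) :
    univ.sup' univ_nonempty (fun o : Option A =>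
        o.elim 0 fun a => x a - (v + t • (fun a : A => if a ∈ α then (1:ℝ) else 0)) a) =
      max ((univ \ α.image some).sup' hβc fun o => o.elim 0 fun a => x a - v a)
        (α.sup' hα (fun a => x a - v a) - t) := by
  have hsome : α.sup' hα (fun a => x a - v a) =
      (α.image some).sup' (hα.image some) fun o => o.elim 0 fun a => x a - v a := by
    rw [sup'_image]
    rfl
  rw [hsome, ← sup'_univ_sub_ite]
  refine sup'_congr _ rfl fun o _ => ?_
  cases o <;> simp
  split_ifs <;> ring

theorem stmt_7_general {Ω : Type*} [MeasurableSpace Ω] (μ : Measure Ω) [IsProbabilityMeasure μ]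
    {A : Type*} [Fintype A] [DecidableEq A]
    (r sstar R : ℝ → ℝ)
    (hr_cont : ContinuousOn r (Icc 0 1))
    (hsstar_mem : ∀ c : ℝ, sstar c ∈ Icc (0:ℝ) 1)
    (hsstar_max : ∀ c : ℝ, ∀ t ∈ Icc (0:ℝ) 1,
      r t + (1 - t) * c ≤ r (sstar c) + (1 - sstar c) * c)
    (hsstar_uniq : ∀ c : ℝ, ∀ t ∈ Icc (0:ℝ) 1,
      (∀ u ∈ Icc (0:ℝ) 1, r u + (1 - u) * c ≤ r t + (1 - t) * c) → t = sstar c)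
    (hR : ∀ c : ℝ, R c = r (sstar c) + (1 - sstar c) * c)
    (Q : Ω → A → ℝ)
    (hQint : ∀ a : A, Integrable (fun ω => Q ω a) μ)
    (ρ : A → ℝ) (v : A → ℝ)
    (α : Finset A) (hα : α.Nonempty) :
    let ψ : (A → ℝ) → ℝ := fun w =>
      (∫ ω, R (Finset.univ.sup' Finset.univ_nonempty
          (fun o : Option A => o.elim 0 (fun a => Q ω a - w a))) ∂μ)
        + ∑ a : A, w a * ρ a
    Filter.Tendsto
      (fun t : ℝ => (ψ (v + t • (fun a : A => if a ∈ α then (1:ℝ) else 0)) - ψ v) / t)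
      (nhdsWithin 0 (Set.Ioi 0))
      (nhds (-(∫ ω, (1 - sstar (Finset.univ.sup' Finset.univ_nonempty
              (fun o : Option A => o.elim 0 (fun a => Q ω a - v a))))
            * Set.indicator
                {ω' : Ω | ∀ o : Option A, o ∉ α.image some →
                  o.elim 0 (fun a => Q ω' a - v a)
                    < α.sup' hα (fun a => Q ω' a - v a)}
                1 ω ∂μ)
        + ∑ a ∈ α, ρ a)) := by
  intro ψ
  set β := α.image some
  have hβc : (Finset.univ \ β).Nonempty := ⟨none, by simp [β]⟩
  set N : Ω → ℝ := fun ω => (Finset.univ \ β).sup' hβc fun o => o.elim 0 fun a => Q ω a - v a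
  set P : Ω → ℝ := fun ω => α.sup' hα fun a => Q ω a - v a
  have hsup₀ : ∀ ω, Finset.univ.sup' Finset.univ_nonempty
      (fun o : Option A => o.elim 0 fun a => Q ω a - v a) = max (N ω) (P ω) := fun ω => by
    simpa using Finset.sup'_option_elim_sub_add_smul hα hβc (Q ω) v 0
  have hS : {ω' : Ω | ∀ o : Option A, o ∉ β → o.elim 0 (fun a => Q ω' a - v a)
      < α.sup' hα (fun a => Q ω' a - v a)} = {ω | N ω < P ω} := by
    ext ω
    simp only [N, P, Set.mem_ofPred_eq, Finset.sup'_lt_iff, Finset.mem_sdiff, Finset.mem_univ,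
      true_and]
  have hN : Integrable N μ := Integrable.finset_sup' hβc fun o _ => by
    cases o
    exacts [integrable_const 0, (hQint _).sub (integrable_const _)]
  have hP : Integrable P μ :=
    Integrable.finset_sup' hα fun a _ => (hQint a).sub (integrable_const _)
  have hlin : ∀ t : ℝ, ∑ a, (v + t • (fun a : A => if a ∈ α then (1:ℝ) else 0)) a * ρ a =
      ∑ a, v a * ρ a + t * ∑ a ∈ α, ρ a := fun t => by
    simp [add_mul, Finset.sum_add_distrib, Finset.mul_sum, Finset.sum_ite_mem]
  have hlim := (tendsto_integral_slope_max_sub (envelope_lipschitzWith hsstar_mem hsstar_max hR)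
    (tendsto_envelope_slope_left hsstar_mem hsstar_max hR hr_cont hsstar_uniq) hN hP).add_const
      (∑ a ∈ α, ρ a)
  simp only [hsup₀, hS]
  refine hlim.congr' ?_
  filter_upwards [self_mem_nhdsWithin] with t (ht : 0 < t)
  simp only [ψ, Finset.sup'_option_elim_sub_add_smul hα hβc, hsup₀, hlin t]
  field_simp
  ring

/-- One-sided directional derivative of the dual objective
`ψ(v) = E[R(max_{a ∈ A₀}(Q_a - v_a))] + Σ_a v_a ρ_a` at `v` in the direction `1_α`, for a
nonempty subset `α ⊆ A`: the difference quotient along `t → 0⁺` converges to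
`-E[(1 - s*(max_{a∈A₀}(Q_a - v_a))) · 1{max_{a∈α}(Q_a-v_a) > max_{a∈A₀∖α}(Q_a-v_a)}] + Σ_{a∈α} ρ_a`.
Here `A₀ = {0} ∪ A`, `Q_0 ≡ 0`, `v_0 = 0`, `r` is a regular revenue function, `s*(c)` is its
unique maximizer and `R(c) = r(s*(c)) + (1 - s*(c))·c`. -/
theorem stmt_7 {Ω : Type*} [MeasurableSpace Ω] (μ : Measure Ω) [IsProbabilityMeasure μ]
    {A : Type*} [Fintype A] [DecidableEq A]
    (r sstar R : ℝ → ℝ)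
    (hr_cont : ContinuousOn r (Icc 0 1))
    (hr_conc : ConcaveOn ℝ (Icc 0 1) r)
    (hr_nonneg : ∀ u ∈ Icc (0:ℝ) 1, 0 ≤ r u)
    (hr_bdd : ∃ M : ℝ, ∀ u ∈ Icc (0:ℝ) 1, r u ≤ M)
    (hr_zero : r 0 = 0)
    (hsstar_mem : ∀ c : ℝ, sstar c ∈ Icc (0:ℝ) 1)
    (hsstar_max : ∀ c : ℝ, ∀ t ∈ Icc (0:ℝ) 1,
      r t + (1 - t) * c ≤ r (sstar c) + (1 - sstar c) * c)
    (hsstar_uniq : ∀ c : ℝ, ∀ t ∈ Icc (0:ℝ) 1,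
      (∀ u ∈ Icc (0:ℝ) 1, r u + (1 - u) * c ≤ r t + (1 - t) * c) → t = sstar c)
    (hR : ∀ c : ℝ, R c = r (sstar c) + (1 - sstar c) * c)
    (Q : Ω → A → ℝ) (hQmeas : Measurable Q)
    (hQint : ∀ a : A, Integrable (fun ω => Q ω a) μ)
    (ρ : A → ℝ) (v : A → ℝ)
    (α : Finset A) (hα : α.Nonempty) :
    let ψ : (A → ℝ) → ℝ := fun w =>
      (∫ ω, R (Finset.univ.sup' Finset.univ_nonempty
          (fun o : Option A => o.elim 0 (fun a => Q ω a - w a))) ∂μ)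
        + ∑ a : A, w a * ρ a
    Filter.Tendsto
      (fun t : ℝ => (ψ (v + t • (fun a : A => if a ∈ α then (1:ℝ) else 0)) - ψ v) / t)
      (nhdsWithin 0 (Set.Ioi 0))
      (nhds (-(∫ ω, (1 - sstar (Finset.univ.sup' Finset.univ_nonempty
              (fun o : Option A => o.elim 0 (fun a => Q ω a - v a))))
            * Set.indicator
                {ω' : Ω | ∀ o : Option A, o ∉ α.image some →
                  o.elim 0 (fun a => Q ω' a - v a)
                    < α.sup' hα (fun a => Q ω' a - v a)}
                1 ω ∂μ)
        + ∑ a ∈ α, ρ a)) :=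
  stmt_7_general μ r sstar R hr_cont hsstar_mem hsstar_max hsstar_uniq hR Q hQint ρ v α hα
end

section
/- Let Q : Ω → ℝ^A be an integrable random vector on a probability space, extended by Q_0 ≡ 0, let ρ_a ∈ (0,1) for a in the finite set A, and suppose v ∈ ℝ^A (extended by v_0 = 0) minimizes ψ(v) = E[ max_{a∈A₀} (Q_a − v_a) ] + Σ_{a∈A} v_a ρ_a over ℝ^A, where A₀ = {0} ∪ A. If P{Q_a − v_a = Q_{a′} − v_{a′}} = 0 for all distinct a, a′ ∈ A₀, then for each a ∈ A: P{ Q_a − v_a > Q_{a′} − v_{a′} for all a′ ∈ A₀ with a′ ≠ a } = ρ_a. -/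
/-
Perturbing `v` in the single coordinate `a` by `-t` shows that `ρ a` is a subgradient at `0` of
the function `t ↦ E[max (X + t) M]`, where `X = Q_a - v_a` and `M` is the largest of the
other adjusted qualities. By dominated convergence the left and right derivatives of this
function at `0` are `P(M < X)` and `P(M ≤ X)`, so `ρ a` lies between them; as ties are null, both
equal `P(M < X)`, the probability that `a` wins.
-/

open Set MeasureTheory Filter Topology

namespace Finset

variable {α ι : Type*} [LinearOrder α] [Fintype ι] [DecidableEq ι]

theorem sup'_univ_eq_max_sup'_erase {f g : ι → α} (i : ι) (hfg : ∀ j ≠ i, f j = g j)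
    (H : (univ : Finset ι).Nonempty) (h : (univ.erase i).Nonempty) :
    univ.sup' H f = max (f i) ((univ.erase i).sup' h g) := calc
  univ.sup' H f = (insert i (univ.erase i)).sup' (insert_nonempty _ _) f :=
    sup'_congr H (insert_erase (mem_univ i)).symm fun _ _ => rfl
  _ = max (f i) ((univ.erase i).sup' h g) := by
    rw [sup'_insert h]
    exact congrArg (max (f i)) (sup'_congr h rfl fun j hj => hfg j (ne_of_mem_erase hj))

end Finset

theorem tendsto_max_add_sub_max_div (x m : ℝ) :
    Tendsto (fun t => (max (x + t) m - max x m) / t) (𝓝[>] 0)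
      (𝓝 ({y | m ≤ y}.indicator 1 x)) := by
  rcases le_or_gt m x with hmx | hxm
  · rw [indicator_of_mem (show x ∈ {y | m ≤ y} from hmx)]
    refine tendsto_const_nhds.congr' (eventually_mem_nhdsWithin.mono fun t (ht : 0 < t) => ?_)
    beta_reduce
    rw [max_eq_left (show m ≤ x + t by linarith), max_eq_left hmx, add_sub_cancel_left,
      div_self ht.ne', Pi.one_apply]
  · rw [indicator_of_notMem (show x ∉ {y | m ≤ y} from hxm.not_ge)]
    refine tendsto_const_nhds.congr' ?_
    filter_upwards [Ioo_mem_nhdsGT (sub_pos.2 hxm)] with t ht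
    rw [max_eq_right (show x + t ≤ m by linarith [ht.2]), max_eq_right hxm.le, sub_self,
      zero_div]

theorem tendsto_max_sub_sub_max_div (x m : ℝ) :
    Tendsto (fun t => (max (x - t) m - max x m) / t) (𝓝[>] 0)
      (𝓝 (-{y | m < y}.indicator 1 x)) := by
  rcases lt_or_ge m x with hmx | hxm
  · rw [indicator_of_mem (show x ∈ {y | m < y} from hmx)]
    refine tendsto_const_nhds.congr' ?_
    filter_upwards [Ioo_mem_nhdsGT (sub_pos.2 hmx)] with t ht
    rw [max_eq_left (show m ≤ x - t by linarith [ht.2]), max_eq_left hmx.le,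
      sub_sub_cancel_left, neg_div, div_self ht.1.ne', Pi.one_apply]
  · rw [indicator_of_notMem (show x ∉ {y | m < y} from hxm.not_gt)]
    refine tendsto_const_nhds.congr' (eventually_mem_nhdsWithin.mono fun t (ht : 0 < t) => ?_)
    beta_reduce
    rw [max_eq_right (show x - t ≤ m by linarith), max_eq_right hxm, sub_self, zero_div,
      neg_zero]

namespace MeasureTheory

variable {Ω ι : Type*} [MeasurableSpace Ω] {μ : Measure Ω}

theorem _root_.Finset.measurable_sup'' {s : Finset ι} (hs : s.Nonempty) {f : ι → Ω → ℝ}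
    (hf : ∀ i ∈ s, Measurable (f i)) : Measurable fun ω => s.sup' hs fun i => f i ω := by
  simpa only [← Finset.sup'_apply] using Finset.measurable_sup' hs hf

theorem Integrable.finset_sup'_s9 {s : Finset ι} (hs : s.Nonempty) {f : ι → Ω → ℝ}
    (hf : ∀ i ∈ s, Integrable (f i) μ) : Integrable (fun ω => s.sup' hs fun i => f i ω) μ := by
  simpa only [← Finset.sup'_apply] using
    Finset.sup'_induction hs f (p := (Integrable · μ)) (fun _ hf _ hg => hf.sup hg) hf

theorem measure_setOf_eq_sup'_eq_zero {s : Finset ι} (hs : s.Nonempty) {f : ι → Ω → ℝ}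
    {X : Ω → ℝ} (h : ∀ i ∈ s, μ {ω | f i ω = X ω} = 0) :
    μ {ω | X ω = s.sup' hs fun i => f i ω} = 0 := by
  refine measure_mono_null (fun ω hω => ?_) ((measure_biUnion_null_iff s.countable_toSet).2 h)
  obtain ⟨i, hi, hmax⟩ := s.exists_mem_eq_sup' hs fun i => f i ω
  exact mem_biUnion hi (hω.trans hmax).symm

variable [IsFiniteMeasure μ]

theorem tendsto_integral_div_nhdsGT_of_abs_le {f : ℝ → Ω → ℝ}
    {g : Ω → ℝ} (hf : ∀ t, Measurable (f t)) (hbound : ∀ t ω, |f t ω| ≤ |t|)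
    (hlim : ∀ ω, Tendsto (fun t => f t ω / t) (𝓝[>] 0) (𝓝 (g ω))) :
    Tendsto (fun t => (∫ ω, f t ω ∂μ) / t) (𝓝[>] 0) (𝓝 (∫ ω, g ω ∂μ)) := by
  simp_rw [← integral_div]
  refine tendsto_integral_filter_of_dominated_convergence (fun _ => 1)
    (.of_forall fun t => ((hf t).div_const t).aestronglyMeasurable)
    (.of_forall fun t => ae_of_all _ fun ω => ?_) (integrable_const 1) (ae_of_all _ hlim)
  rw [norm_div, Real.norm_eq_abs, Real.norm_eq_abs]
  exact div_le_one_of_le₀ (hbound t ω) (abs_nonneg t)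

variable {X M : Ω → ℝ} {ρ : ℝ}

theorem mem_Icc_of_forall_integral_max_add_ge (hXm : Measurable X) (hMm : Measurable M)
    (hX : Integrable X μ) (hM : Integrable M μ)
    (hsub : ∀ t : ℝ, (∫ ω, max (X ω) (M ω) ∂μ) + t * ρ ≤ ∫ ω, max (X ω + t) (M ω) ∂μ) :
    ρ ∈ Icc (μ.real {ω | M ω < X ω}) (μ.real {ω | M ω ≤ X ω}) := by
  have hint : ∀ t, Integrable (fun ω => max (X ω + t) (M ω)) μ := fun t =>
    (hX.add (integrable_const t)).sup hM
  have hdiff : ∀ t, t * ρ ≤ ∫ ω, max (X ω + t) (M ω) - max (X ω) (M ω) ∂μ := fun t => by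
    rw [integral_sub (hint t) (by simpa only [add_zero] using hint 0)]
    linarith [hsub t]
  have hbound : ∀ t ω, |max (X ω + t) (M ω) - max (X ω) (M ω)| ≤ |t| := fun t ω => by
    simpa only [add_sub_cancel_left] using abs_max_sub_max_le_abs (X ω + t) (X ω) (M ω)
  have hright : Tendsto (fun t => (∫ ω, max (X ω + t) (M ω) - max (X ω) (M ω) ∂μ) / t)
      (𝓝[>] 0) (𝓝 (μ.real {ω | M ω ≤ X ω})) := by
    rw [← integral_indicator_one (measurableSet_le hMm hXm)]
    exact tendsto_integral_div_nhdsGT_of_abs_le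
      (fun t => ((hXm.add_const t).max hMm).sub (hXm.max hMm)) hbound
      (fun ω => tendsto_max_add_sub_max_div (X ω) (M ω))
  have hleft : Tendsto (fun t => (∫ ω, max (X ω - t) (M ω) - max (X ω) (M ω) ∂μ) / t)
      (𝓝[>] 0) (𝓝 (-μ.real {ω | M ω < X ω})) := by
    rw [← integral_indicator_one (measurableSet_lt hMm hXm), ← integral_neg]
    exact tendsto_integral_div_nhdsGT_of_abs_le
      (fun t => ((hXm.sub_const t).max hMm).sub (hXm.max hMm))
      (fun t ω => by simpa only [← sub_eq_add_neg, abs_neg] using hbound (-t) ω)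
      (fun ω => tendsto_max_sub_sub_max_div (X ω) (M ω))
  constructor
  · refine neg_le_neg_iff.1 (ge_of_tendsto hleft ?_)
    filter_upwards [self_mem_nhdsWithin] with t (ht : 0 < t)
    rw [le_div_iff₀ ht]
    have := hdiff (-t)
    simp only [← sub_eq_add_neg] at this
    linarith
  · refine ge_of_tendsto hright ?_
    filter_upwards [self_mem_nhdsWithin] with t (ht : 0 < t)
    rw [le_div_iff₀ ht, mul_comm]
    exact hdiff t

theorem measureReal_lt_eq_of_forall_integral_max_add_ge (hXm : Measurable X)
    (hMm : Measurable M) (hX : Integrable X μ) (hM : Integrable M μ)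
    (hsub : ∀ t : ℝ, (∫ ω, max (X ω) (M ω) ∂μ) + t * ρ ≤ ∫ ω, max (X ω + t) (M ω) ∂μ)
    (hties : μ {ω | X ω = M ω} = 0) :
    μ.real {ω | M ω < X ω} = ρ := by
  obtain ⟨hlt, hle⟩ := mem_Icc_of_forall_integral_max_add_ge hXm hMm hX hM hsub
  have : μ.real {ω | M ω ≤ X ω} ≤ μ.real {ω | M ω < X ω} := calc
    _ ≤ μ.real ({ω | M ω < X ω} ∪ {ω | X ω = M ω}) :=
      measureReal_mono fun ω (h : M ω ≤ X ω) => h.lt_or_eq.imp id Eq.symm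
    _ ≤ μ.real {ω | M ω < X ω} + μ.real {ω | X ω = M ω} := measureReal_union_le _ _
    _ = μ.real {ω | M ω < X ω} := by
      rw [(measureReal_eq_zero_iff (measure_ne_top μ _)).2 hties, add_zero]
  linarith

end MeasureTheory

theorem stmt_9_general {Ω : Type*} [MeasurableSpace Ω] (μ : Measure Ω) [IsProbabilityMeasure μ]
    {A : Type*} [Fintype A]
    (Q : Ω → A → ℝ) (hQmeas : Measurable Q)
    (hQint : ∀ a : A, Integrable (fun ω => Q ω a) μ)
    (ρ : A → ℝ)
    (v : A → ℝ)
    (hopt : ∀ w : A → ℝ,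
      (∫ ω, Finset.univ.sup' Finset.univ_nonempty
          (fun o : Option A => o.elim 0 (fun a => Q ω a - v a)) ∂μ)
        + ∑ a : A, v a * ρ a
      ≤ (∫ ω, Finset.univ.sup' Finset.univ_nonempty
          (fun o : Option A => o.elim 0 (fun a => Q ω a - w a)) ∂μ)
        + ∑ a : A, w a * ρ a)
    (hties : ∀ o o' : Option A, o ≠ o' →
      μ {ω | o.elim 0 (fun a => Q ω a - v a) = o'.elim 0 (fun a => Q ω a - v a)} = 0) :
    ∀ a : A,
      (μ {ω | ∀ o : Option A, o ≠ some a →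
          o.elim 0 (fun b => Q ω b - v b) < Q ω a - v a}).toReal = ρ a := by
  classical
  intro a
  set val : Option A → Ω → ℝ := fun o ω => o.elim 0 fun b => Q ω b - v b
  have hs : (Finset.univ.erase (some a)).Nonempty := ⟨none, by simp⟩
  set M : Ω → ℝ := fun ω => (Finset.univ.erase (some a)).sup' hs fun o => val o ω
  have hsplit (w : A → ℝ) (hw : ∀ b ≠ a, w b = v b) :
      (fun ω => Finset.univ.sup' Finset.univ_nonempty
        (fun o : Option A => o.elim 0 fun b => Q ω b - w b)) =
      fun ω => max (Q ω a - w a) (M ω) := by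
    refine funext fun ω => Finset.sup'_univ_eq_max_sup'_erase (some a) ?_ _ hs
    rintro (_ | b) hb
    · rfl
    · simp only [Option.elim_some, val, hw b (by simpa using hb)]
  have hsub (t : ℝ) : (∫ ω, max (Q ω a - v a) (M ω) ∂μ) + t * ρ a ≤
      ∫ ω, max (Q ω a - v a + t) (M ω) ∂μ := by
    have h := hopt (v - Pi.single a t)
    rw [hsplit v fun _ _ => rfl, hsplit _ fun b hb => by simp [hb]] at h
    simp only [Pi.sub_apply, Pi.single_eq_same, sub_sub_eq_add_sub, add_sub_right_comm, sub_mul,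
      Finset.sum_sub_distrib, Pi.single_apply, ite_mul, zero_mul, Finset.sum_ite_eq',
      Finset.mem_univ, if_true] at h
    linarith
  have hval (o : Option A) : Measurable (val o) ∧ Integrable (val o) μ := by
    rcases o with _ | b
    · exact ⟨measurable_const, integrable_const 0⟩
    · exact ⟨((measurable_pi_apply b).comp hQmeas).sub_const _, (hQint b).sub (integrable_const _)⟩
  have hset : {ω | ∀ o : Option A, o ≠ some a → val o ω < Q ω a - v a} =
      {ω | M ω < Q ω a - v a} := by
    ext ω
    simp only [M, mem_ofPred_eq, Finset.sup'_lt_iff, Finset.mem_erase, Finset.mem_univ,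
      and_true]
  rw [hset]
  exact measureReal_lt_eq_of_forall_integral_max_add_ge (hval (some a)).1
    (Finset.measurable_sup'' hs fun o _ => (hval o).1) (hval (some a)).2
    (Integrable.finset_sup'_s9 hs fun o _ => (hval o).2) hsub
    (measure_setOf_eq_sup'_eq_zero hs fun o ho => hties o (some a) (Finset.ne_of_mem_erase ho))

/-- The no-exchange special case of the dual optimality conditions. If `v`
minimizes `ψ(w) = E[max_{a∈A₀}(Q_a - w_a)] + Σ_a w_a ρ_a` and ties occur with probability
zero, then for each `a ∈ A`,
`P{Q_a - v_a > Q_{a'} - v_{a'} for all a' ∈ A₀, a' ≠ a} = ρ_a`.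
Here `A₀ = {0} ∪ A`, `Q_0 ≡ 0` and `v_0 = 0`. -/
theorem stmt_9 {Ω : Type*} [MeasurableSpace Ω] (μ : Measure Ω) [IsProbabilityMeasure μ]
    {A : Type*} [Fintype A]
    (Q : Ω → A → ℝ) (hQmeas : Measurable Q)
    (hQint : ∀ a : A, Integrable (fun ω => Q ω a) μ)
    (ρ : A → ℝ) (hρ : ∀ a, ρ a ∈ Ioo (0:ℝ) 1)
    (v : A → ℝ)
    (hopt : ∀ w : A → ℝ,
      (∫ ω, Finset.univ.sup' Finset.univ_nonempty
          (fun o : Option A => o.elim 0 (fun a => Q ω a - v a)) ∂μ)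
        + ∑ a : A, v a * ρ a
      ≤ (∫ ω, Finset.univ.sup' Finset.univ_nonempty
          (fun o : Option A => o.elim 0 (fun a => Q ω a - w a)) ∂μ)
        + ∑ a : A, w a * ρ a)
    (hties : ∀ o o' : Option A, o ≠ o' →
      μ {ω | o.elim 0 (fun a => Q ω a - v a) = o'.elim 0 (fun a => Q ω a - v a)} = 0) :
    ∀ a : A,
      (μ {ω | ∀ o : Option A, o ≠ some a →
          o.elim 0 (fun b => Q ω b - v b) < Q ω a - v a}).toReal = ρ a :=
  stmt_9_general μ Q hQmeas hQint ρ v hopt hties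
end

section
/- Let A₀ = {0, 1, …, A} and let ρ_a > 0 with Σ_{a∈A₀} ρ_a = 1. Let N be a positive integer such that C_a := ρ_a·N is a positive integer for every a ∈ A₀, and let (X_n)_{n≥1} be i.i.d. A₀-valued random variables with P(X_n = a) = ρ_a. For each a, let N_a = inf{ n ≥ 1 : #{ i ≤ n : X_i = a } = C_a } and N* = min_{a∈A₀} N_a. Then E[N*] ≥ N − √N · K(ρ), where K(ρ) = √( (A/(A+1)) · Σ_{a∈A₀} (1 − ρ_a)/ρ_a ). -/
/-!
Each `N_a` is a negative-binomial waiting time: `N_a > n` exactly when fewer than `C_a` of the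
first `n` impressions went to `a`, a binomial event. Summing these tails against `1` and `2n + 1`
gives `E[N_a] = C_a / ρ_a = N` and `Var[N_a] = C_a (1 - ρ_a) / ρ_a² = N (1 - ρ_a) / ρ_a`.
For reals `t_0, …, t_A`, Samuelson's inequality bounds the gap between their mean and their
minimum by `√(A / (A + 1) · Σ_a (t_a - m)²)` for every `m`. Taking `m = N`, expectations, and
Jensen's inequality for `√` gives `E[min_a N_a] ≥ N - √(A / (A + 1) · Σ_a Var[N_a])`.
-/

open MeasureTheory ProbabilityTheory Finset
open scoped ENNReal

section Samuelson

variable {ι : Type*} [Fintype ι]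

-- Samuelson's inequality for centred data: Cauchy–Schwarz on the other entries, which sum to
-- `-z j`.
theorem card_mul_sq_le_of_sum_eq_zero [DecidableEq ι] {z : ι → ℝ} (hz : ∑ a, z a = 0)
    (j : ι) :
    Fintype.card ι * z j ^ 2 ≤ (Fintype.card ι - 1) * ∑ a, z a ^ 2 := by
  have hrest : ∑ a ∈ univ.erase j, z a = -z j := by
    linarith [add_sum_erase univ z (mem_univ j)]
  have hrest_sq : ∑ a ∈ univ.erase j, z a ^ 2 = ∑ a, z a ^ 2 - z j ^ 2 := by
    linarith [add_sum_erase univ (fun a => z a ^ 2) (mem_univ j)]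
  have hcard : ((univ.erase j).card : ℝ) = Fintype.card ι - 1 := by
    rw [card_erase_of_mem (mem_univ j), card_univ,
      Nat.cast_sub (Fintype.card_pos_iff.mpr ⟨j⟩), Nat.cast_one]
  have hCS := sq_sum_le_card_mul_sum_sq (s := univ.erase j) (f := z)
  rw [hrest, hrest_sq, hcard, neg_sq] at hCS
  linarith

theorem sum_sq_le_sum_add_sq_of_sum_eq_zero {z : ι → ℝ} (hz : ∑ a, z a = 0) (d : ℝ) :
    ∑ a, z a ^ 2 ≤ ∑ a, (z a + d) ^ 2 := by
  simp only [add_sq, sum_add_distrib, ← sum_mul, ← mul_sum, hz, mul_zero, zero_mul, add_zero]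
  exact le_add_of_nonneg_right (sum_nonneg fun _ _ => sq_nonneg d)

theorem mean_sub_le_sqrt (t : ι → ℝ) (m : ℝ) (j : ι) :
    (∑ a, t a) / Fintype.card ι - t j ≤
      √((Fintype.card ι - 1) / Fintype.card ι * ∑ a, (t a - m) ^ 2) := by
  classical
  set n : ℝ := (Fintype.card ι : ℝ)
  set t' := (∑ a, t a) / n
  have hn : 1 ≤ n := Nat.one_le_cast.mpr (Fintype.card_pos_iff.mpr ⟨j⟩)
  have hcentred : ∑ a, (t a - t') = 0 := by
    rw [sum_sub_distrib, sum_const, card_univ, nsmul_eq_mul]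
    exact sub_eq_zero.mpr (mul_div_cancel₀ _ (by positivity)).symm
  have hm : ∑ a, (t a - t') ^ 2 ≤ ∑ a, (t a - m) ^ 2 := by
    simpa using sum_sq_le_sum_add_sq_of_sum_eq_zero hcentred (t' - m)
  refine Real.le_sqrt_of_sq_le ?_
  rw [div_mul_eq_mul_div, le_div_iff₀ (by linarith)]
  calc (t' - t j) ^ 2 * n = n * (t j - t') ^ 2 := by ring
    _ ≤ (n - 1) * ∑ a, (t a - t') ^ 2 := card_mul_sq_le_of_sum_eq_zero hcentred j
    _ ≤ (n - 1) * ∑ a, (t a - m) ^ 2 := by gcongr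

end Samuelson

section Expectation

variable {Ω : Type*} [MeasurableSpace Ω] {μ : Measure Ω}

theorem memLp_two_sqrt {R : Ω → ℝ} (hR : Integrable R μ) (h0 : 0 ≤ᵐ[μ] R) :
    MemLp (fun ω => √(R ω)) 2 μ := by
  refine (memLp_two_iff_integrable_sq
    (Real.continuous_sqrt.comp_aestronglyMeasurable hR.aestronglyMeasurable)).mpr ?_
  refine hR.congr ?_
  filter_upwards [h0] with ω hω using (Real.sq_sqrt hω).symm

theorem integral_sqrt_le_sqrt_integral [IsProbabilityMeasure μ] {R : Ω → ℝ}
    (hR : Integrable R μ) (h0 : 0 ≤ᵐ[μ] R) : ∫ ω, √(R ω) ∂μ ≤ √(∫ ω, R ω ∂μ) := by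
  refine Real.le_sqrt_of_sq_le ?_
  have hvar := variance_nonneg (fun ω => √(R ω)) μ
  rw [variance_eq_sub (memLp_two_sqrt hR h0)] at hvar
  have hsq : ∫ ω, ((fun ω => √(R ω)) ^ 2) ω ∂μ = ∫ ω, R ω ∂μ := by
    refine integral_congr_ae ?_
    filter_upwards [h0] with ω hω using Real.sq_sqrt hω
  linarith

theorem integrable_inf' {ι : Type*} {s : Finset ι} (hs : s.Nonempty) {f : ι → Ω → ℝ}
    (hf : ∀ a ∈ s, Integrable (f a) μ) :
    Integrable (fun ω => s.inf' hs (fun a => f a ω)) μ := by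
  rw [show (fun ω => s.inf' hs fun a => f a ω) = s.inf' hs f from
    funext fun ω => (Finset.inf'_apply hs f ω).symm]
  exact inf'_induction hs f (p := fun g => Integrable g μ) (fun _ hg _ hh => hg.inf hh) hf

theorem sub_sqrt_le_integral_inf' [IsProbabilityMeasure μ] {ι : Type*} [Fintype ι] [Nonempty ι]
    {T : ι → Ω → ℝ} {m : ℝ} (hT : ∀ a, MemLp (T a) 2 μ)
    (hmean : ∀ a, ∫ ω, T a ω ∂μ = m) :
    m - √((Fintype.card ι - 1) / Fintype.card ι * ∑ a, Var[T a; μ]) ≤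
      ∫ ω, univ.inf' univ_nonempty (fun a => T a ω) ∂μ := by
  set c : ℝ := (Fintype.card ι - 1) / Fintype.card ι
  set R : Ω → ℝ := fun ω => c * ∑ a, (T a ω - m) ^ 2
  have hc : 0 ≤ c :=
    div_nonneg (sub_nonneg.mpr (Nat.one_le_cast.mpr Fintype.card_pos)) (by positivity)
  have hTint : ∀ a, Integrable (T a) μ := fun a => (hT a).integrable one_le_two
  have hsq : ∀ a, Integrable (fun ω => (T a ω - m) ^ 2) μ :=
    fun a => ((hT a).sub (memLp_const m)).integrable_sq
  have hRint : Integrable R μ := (integrable_finsetSum _ fun a _ => hsq a).const_mul c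
  have hR0 : 0 ≤ᵐ[μ] R :=
    ae_of_all _ fun ω => mul_nonneg hc (sum_nonneg fun a _ => sq_nonneg _)
  have hR : ∫ ω, R ω ∂μ = c * ∑ a, Var[T a; μ] := by
    rw [integral_const_mul, integral_finsetSum _ fun a _ => hsq a]
    congr 1
    refine sum_congr rfl fun a _ => ?_
    rw [variance_eq_integral (hT a).aemeasurable, hmean a]
  have hmeanInt : Integrable (fun ω => (∑ a, T a ω) / Fintype.card ι) μ :=
    (integrable_finsetSum _ fun a _ => hTint a).div_const _
  have hmeanT : ∫ ω, (∑ a, T a ω) / Fintype.card ι ∂μ = m := by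
    rw [integral_div, integral_finsetSum _ fun a _ => hTint a]
    simp [hmean]
  have hsqrtR := (memLp_two_sqrt hRint hR0).integrable one_le_two
  calc m - √(c * ∑ a, Var[T a; μ])
      ≤ m - ∫ ω, √(R ω) ∂μ := by
        rw [← hR]; linarith [integral_sqrt_le_sqrt_integral hRint hR0]
    _ = ∫ ω, ((∑ a, T a ω) / Fintype.card ι - √(R ω)) ∂μ := by
        rw [integral_sub hmeanInt hsqrtR, hmeanT]
    _ ≤ ∫ ω, univ.inf' univ_nonempty (fun a => T a ω) ∂μ := by
        refine integral_mono (hmeanInt.sub hsqrtR) (integrable_inf' _ fun a _ => hTint a)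
          fun ω => le_inf' _ _ fun j _ => ?_
        linarith [mean_sub_le_sqrt (T · ω) m j]

end Expectation

theorem sum_range_two_mul_add_one (t : ℕ) : ∑ i ∈ range t, (2 * (i : ℝ) + 1) = t ^ 2 := by
  induction t with
  | zero => simp
  | succ t ih => rw [sum_range_succ, ih]; push_cast; ring

theorem choose_succ_succ_mul_pow_mul_pow (n k : ℕ) (p q : ℝ) :
    ((n + 1).choose (k + 1) : ℝ) * p ^ (k + 1) * q ^ (n - k) =
      n.choose (k + 1) * p ^ (k + 1) * q ^ (n - (k + 1)) * q +
        n.choose k * p ^ k * q ^ (n - k) * p := by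
  rw [Nat.choose_succ_succ', Nat.cast_add]
  rcases lt_or_ge n (k + 1) with h | h
  · rw [Nat.choose_eq_zero_of_lt h, Nat.sub_eq_zero_of_le (Nat.le_of_lt_succ h)]
    ring
  · obtain ⟨j, rfl⟩ := Nat.exists_eq_add_of_le h
    rw [show k + 1 + j - k = j + 1 by omega, Nat.add_sub_cancel_left]
    ring

section NegativeBinomial

variable {p : ℝ}

theorem hasSum_choose_mul_pow_mul_pow_sub (hp : |1 - p| < 1) (k : ℕ) :
    HasSum (fun n => (n.choose k : ℝ) * p ^ k * (1 - p) ^ (n - k)) (1 / p) := by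
  have hp0 : p ≠ 0 := by rintro rfl; simp at hp
  have hshift : HasSum (fun n => ((n + k).choose k : ℝ) * p ^ k * (1 - p) ^ (n + k - k))
      (1 / p) := by
    have hval : p ^ k * (1 / (1 - (1 - p)) ^ (k + 1)) = 1 / p := by
      rw [sub_sub_cancel]; field_simp; ring
    rw [← hval, show (fun n => ((n + k).choose k : ℝ) * p ^ k * (1 - p) ^ (n + k - k)) =
      fun n => p ^ k * ((n + k).choose k * (1 - p) ^ n) from funext fun n => by
        rw [Nat.add_sub_cancel]; ring]
    exact (hasSum_choose_mul_geometric_of_norm_lt_one k (r := 1 - p) hp).mul_left (p ^ k)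
  refine (hasSum_nat_add_iff' k).mp ?_
  rwa [sum_eq_zero fun i hi => by simp [Nat.choose_eq_zero_of_lt (mem_range.mp hi)], sub_zero]

theorem hasSum_add_one_mul_choose_mul_pow_mul_pow_sub (hp : |1 - p| < 1) (k : ℕ) :
    HasSum (fun n : ℕ => ((n : ℝ) + 1) * (n.choose k * p ^ k * (1 - p) ^ (n - k)))
      ((k + 1) / p ^ 2) := by
  have hp0 : p ≠ 0 := by rintro rfl; simp at hp
  -- `(n + 1) C(n, k) = (k + 1) C(n + 1, k + 1)` turns this into the series for `k + 1`, shifted.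
  have hshift := ((hasSum_nat_add_iff' 1).mpr
    (hasSum_choose_mul_pow_mul_pow_sub hp (k + 1))).mul_left ((k + 1) / p)
  have hterm : ∀ n : ℕ, ((n : ℝ) + 1) * (n.choose k * p ^ k * (1 - p) ^ (n - k)) =
      (k + 1) / p * ((n + 1).choose (k + 1) * p ^ (k + 1) * (1 - p) ^ (n + 1 - (k + 1))) := by
    intro n
    have h : ((n : ℝ) + 1) * n.choose k = (n + 1).choose (k + 1) * (k + 1) := by
      exact_mod_cast Nat.add_one_mul_choose_eq n k
    rw [Nat.add_sub_add_right, ← mul_assoc, ← mul_assoc, h]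
    field_simp; ring
  rw [funext hterm, show (k + 1) / p ^ 2 = (k + 1) / p * (1 / p - ∑ i ∈ range 1,
    (i.choose (k + 1) : ℝ) * p ^ (k + 1) * (1 - p) ^ (i - (k + 1))) by simp; field_simp]
  exact hshift

end NegativeBinomial

section LayerCake

variable {Ω : Type*} [MeasurableSpace Ω] {μ : Measure Ω} {T : Ω → ℕ}

theorem lintegral_sum_range_eq_tsum (hT : Measurable T) (w : ℕ → ℝ≥0∞) :
    ∫⁻ ω, ∑ i ∈ range (T ω), w i ∂μ = ∑' n, w n * μ {ω | n < T ω} := by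
  have hmeas : ∀ n, MeasurableSet {ω | n < T ω} := fun n => hT measurableSet_Ioi
  have hpt : ∀ ω, ∑ i ∈ range (T ω), w i =
      ∑' n, {ω | n < T ω}.indicator (fun _ => w n) ω := by
    intro ω
    rw [tsum_eq_sum (s := range (T ω)) fun n hn => Set.indicator_of_notMem (by simpa using hn) _]
    exact sum_congr rfl fun n hn =>
      (Set.indicator_of_mem (s := {ω | n < T ω}) (mem_range.mp hn) fun _ => w n).symm
  rw [lintegral_congr hpt,
    lintegral_tsum fun n => (measurable_const.indicator (hmeas n)).aemeasurable]
  exact tsum_congr fun n => lintegral_indicator_const (hmeas n) _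

theorem measurable_sum_range (hT : Measurable T) (w : ℕ → ℝ) :
    Measurable fun ω => ∑ i ∈ range (T ω), w i :=
  (measurable_from_top (f := fun t => ∑ i ∈ range t, w i)).comp hT

variable [IsFiniteMeasure μ] {w : ℕ → ℝ} {S : ℝ}

theorem lintegral_ofReal_sum_range (hT : Measurable T) (hw : ∀ n, 0 ≤ w n)
    (hS : HasSum (fun n => w n * μ.real {ω | n < T ω}) S) :
    ∫⁻ ω, ENNReal.ofReal (∑ i ∈ range (T ω), w i) ∂μ = ENNReal.ofReal S := by
  simp_rw [ENNReal.ofReal_sum_of_nonneg fun i _ => hw i]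
  rw [lintegral_sum_range_eq_tsum hT, ← hS.tsum_eq,
    ENNReal.ofReal_tsum_of_nonneg (fun n => mul_nonneg (hw n) measureReal_nonneg) hS.summable]
  refine tsum_congr fun n => ?_
  rw [ENNReal.ofReal_mul (hw n), ofReal_measureReal]

theorem integrable_sum_range_of_hasSum (hT : Measurable T) (hw : ∀ n, 0 ≤ w n)
    (hS : HasSum (fun n => w n * μ.real {ω | n < T ω}) S) :
    Integrable (fun ω => ∑ i ∈ range (T ω), w i) μ := by
  refine ⟨(measurable_sum_range hT w).aestronglyMeasurable, ?_⟩
  rw [hasFiniteIntegral_iff_ofReal (ae_of_all _ fun ω => sum_nonneg fun i _ => hw i),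
    lintegral_ofReal_sum_range hT hw hS]
  exact ENNReal.ofReal_lt_top

theorem integral_sum_range_of_hasSum (hT : Measurable T) (hw : ∀ n, 0 ≤ w n)
    (hS : HasSum (fun n => w n * μ.real {ω | n < T ω}) S) :
    ∫ ω, ∑ i ∈ range (T ω), w i ∂μ = S := by
  rw [integral_eq_lintegral_of_nonneg_ae (ae_of_all _ fun ω => sum_nonneg fun i _ => hw i)
    (measurable_sum_range hT w).aestronglyMeasurable, lintegral_ofReal_sum_range hT hw hS,
    ENNReal.toReal_ofReal (hS.nonneg fun n => mul_nonneg (hw n) measureReal_nonneg)]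

end LayerCake

theorem abs_one_sub_measureReal_lt_one {Ω : Type*} [MeasurableSpace Ω] {μ : Measure Ω}
    [IsProbabilityMeasure μ] {s : Set Ω} (hs : 0 < μ.real s) : |1 - μ.real s| < 1 := by
  rw [abs_lt]
  constructor <;> linarith [measureReal_le_one (μ := μ) (s := s)]

section Occurrences

variable {Ω α : Type*} [DecidableEq α] {X : ℕ → Ω → α} {a : α} {c n : ℕ} {ω : Ω}

def occurrences (X : ℕ → Ω → α) (a : α) (n : ℕ) (ω : Ω) : ℕ :=
  #{m ∈ range n | X m ω = a}

-- Junk value: `sInf ∅ = 0`, so a count that never reaches `c` has waiting time `0`;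
-- `ae_exists_occurrences_eq` shows this happens only on a null set.
noncomputable def waitingTime (X : ℕ → Ω → α) (a : α) (c : ℕ) (ω : Ω) : ℕ :=
  sInf {n | occurrences X a n ω = c}

@[simp]
theorem occurrences_zero : occurrences X a 0 ω = 0 := rfl

theorem occurrences_succ :
    occurrences X a (n + 1) ω = occurrences X a n ω + if X n ω = a then 1 else 0 := by
  simp only [occurrences, range_add_one, filter_insert]
  split_ifs with h
  · exact card_insert_of_notMem (by simp)
  · rfl

theorem occurrences_mono : Monotone fun n => occurrences X a n ω :=
  fun _ _ h => card_le_card (filter_subset_filter _ (range_subset_range.mpr h))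

theorem exists_occurrences_eq_of_le (h : c ≤ occurrences X a n ω) :
    ∃ m ≤ n, occurrences X a m ω = c := by
  induction n with
  | zero => exact ⟨0, le_rfl, by simp only [occurrences_zero] at h ⊢; omega⟩
  | succ n ih =>
    by_cases hn : c ≤ occurrences X a n ω
    · obtain ⟨m, hm, hmc⟩ := ih hn
      exact ⟨m, hm.trans n.le_succ, hmc⟩
    · refine ⟨n + 1, le_rfl, ?_⟩
      rw [occurrences_succ] at h ⊢
      split_ifs at h ⊢ <;> omega

theorem lt_waitingTime_iff :
    n < waitingTime X a c ω ↔ occurrences X a n ω < c ∧ ∃ m, occurrences X a m ω = c := by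
  constructor
  · intro hn
    have hne : {m | occurrences X a m ω = c}.Nonempty := by
      by_contra h
      rw [Set.not_nonempty_iff_eq_empty] at h
      simp [waitingTime, h] at hn
    refine ⟨lt_of_not_ge fun hc => ?_, hne⟩
    obtain ⟨m, hm, hmc⟩ := exists_occurrences_eq_of_le hc
    exact ((Nat.sInf_le (s := {m | occurrences X a m ω = c}) hmc).trans hm).not_gt hn
  · rintro ⟨hn, hne⟩
    have hT : occurrences X a (waitingTime X a c ω) ω = c := Nat.sInf_mem hne
    refine lt_of_not_ge fun hle => ?_
    have : occurrences X a _ ω ≤ occurrences X a n ω := occurrences_mono hle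
    omega

variable [MeasurableSpace Ω] [MeasurableSpace α] [MeasurableSingletonClass α] {μ : Measure Ω}

theorem measurable_occurrences (hX : ∀ n, Measurable (X n)) (n : ℕ) :
    Measurable (occurrences X a n) := by
  have h : occurrences X a n = fun ω => ∑ m ∈ range n, if X m ω = a then 1 else 0 := by
    funext ω; exact card_filter _ _
  rw [h]
  exact Finset.measurable_sum _ fun m _ =>
    Measurable.ite (hX m (measurableSet_singleton a)) measurable_const measurable_const

theorem measurable_waitingTime (hX : ∀ n, Measurable (X n)) :
    Measurable (waitingTime X a c) := by
  refine measurable_of_Ioi fun n => ?_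
  have h : waitingTime X a c ⁻¹' Set.Ioi n =
      {ω | occurrences X a n ω < c} ∩ ⋃ m, {ω | occurrences X a m ω = c} := by
    ext ω; simp [lt_waitingTime_iff]
  rw [h]
  exact (measurable_occurrences hX n measurableSet_Iio).inter
    (MeasurableSet.iUnion fun m => measurable_occurrences hX m (measurableSet_singleton c))

theorem indepFun_occurrences (hX : ∀ n, Measurable (X n)) (hXindep : iIndepFun X μ) (n : ℕ) :
    IndepFun (occurrences X a n) (X n) μ := by
  have hφ : Measurable fun v : range n → α => ∑ i, if v i = a then 1 else 0 :=
    Finset.measurable_sum _ fun i _ => Measurable.ite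
      ((measurableSet_singleton a).preimage (measurable_pi_apply i)) measurable_const
      measurable_const
  have hψ : Measurable fun v : ({n} : Finset ℕ) → α => v ⟨n, mem_singleton_self n⟩ :=
    measurable_pi_apply _
  have hocc : occurrences X a n =
      (fun v : range n → α => ∑ i, if v i = a then 1 else 0) ∘
        fun ω (i : range n) => X i ω := by
    funext ω
    exact (card_filter _ _).trans (sum_coe_sort (range n) fun m => if X m ω = a then 1 else 0).symm
  rw [hocc]
  exact (hXindep.indepFun_finset (range n) {n} (by simp) hX).comp hφ hψ

theorem measureReal_occurrences_inter_eq_mul (hX : ∀ n, Measurable (X n)) (hXindep : iIndepFun X μ)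
    (n k : ℕ) {s : Set α} (hs : MeasurableSet s) :
    μ.real ({ω | occurrences X a n ω = k} ∩ {ω | X n ω ∈ s}) =
      μ.real {ω | occurrences X a n ω = k} * μ.real {ω | X n ω ∈ s} := by
  simp only [measureReal_def, ← ENNReal.toReal_mul]
  congr 1
  exact (indepFun_occurrences hX hXindep n).measure_inter_preimage_eq_mul {k} s
    (measurableSet_singleton k) hs

variable [IsProbabilityMeasure μ]

theorem measureReal_occurrences_eq (hX : ∀ n, Measurable (X n))
    (hXindep : iIndepFun X μ) {p : ℝ} (hp : ∀ n, μ.real {ω | X n ω = a} = p) (n k : ℕ) :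
    μ.real {ω | occurrences X a n ω = k} = n.choose k * p ^ k * (1 - p) ^ (n - k) := by
  induction n generalizing k with
  | zero => cases k <;> simp
  | succ n ih =>
    have hmeas : ∀ j, MeasurableSet {ω | occurrences X a n ω = j} := fun j =>
      measurable_occurrences hX n (measurableSet_singleton j)
    have hhit : ∀ j,
        μ.real ({ω | occurrences X a n ω = j} ∩ {ω | X n ω ∈ ({a} : Set α)}) =
        μ.real {ω | occurrences X a n ω = j} * p := by
      intro j
      rw [measureReal_occurrences_inter_eq_mul hX hXindep n j (measurableSet_singleton a), ← hp n]
      rfl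
    have hmiss : ∀ j,
        μ.real ({ω | occurrences X a n ω = j} ∩ {ω | X n ω ∈ ({a}ᶜ : Set α)}) =
        μ.real {ω | occurrences X a n ω = j} * (1 - p) := by
      intro j
      rw [measureReal_occurrences_inter_eq_mul hX hXindep n j (measurableSet_singleton a).compl,
        ← hp n]
      exact congrArg _ (probReal_compl_eq_one_sub (hX n (measurableSet_singleton a)))
    cases k with
    | zero =>
      have hset : {ω | occurrences X a (n + 1) ω = 0} =
          {ω | occurrences X a n ω = 0} ∩ {ω | X n ω ∈ ({a}ᶜ : Set α)} := by
        ext ω; simp [occurrences_succ]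
      rw [hset, hmiss, ih]
      simp [pow_succ]
    | succ k =>
      have hset : {ω | occurrences X a (n + 1) ω = k + 1} =
          ({ω | occurrences X a n ω = k + 1} ∩ {ω | X n ω ∈ ({a}ᶜ : Set α)}) ∪
            ({ω | occurrences X a n ω = k} ∩ {ω | X n ω ∈ ({a} : Set α)}) := by
        ext ω; by_cases h : X n ω = a <;> simp [occurrences_succ, h]
      rw [hset, measureReal_union, hmiss, hhit, ih, ih, Nat.add_sub_add_right,
        choose_succ_succ_mul_pow_mul_pow]
      · exact Set.disjoint_left.mpr fun ω h1 h2 => h1.2 h2.2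
      · exact (hmeas k).inter (hX n (measurableSet_singleton a))

theorem measureReal_occurrences_lt (hX : ∀ n, Measurable (X n))
    (hXindep : iIndepFun X μ) {p : ℝ} (hp : ∀ n, μ.real {ω | X n ω = a} = p) (n c : ℕ) :
    μ.real {ω | occurrences X a n ω < c} =
      ∑ k ∈ range c, (n.choose k : ℝ) * p ^ k * (1 - p) ^ (n - k) := by
  have hset :
      {ω | occurrences X a n ω < c} = ⋃ k ∈ range c, {ω | occurrences X a n ω = k} := by
    ext ω; simp
  rw [hset, measureReal_biUnion_finset (f := fun k => {ω | occurrences X a n ω = k})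
    (fun k _ l _ hkl => Set.disjoint_left.mpr fun ω h1 h2 => hkl (h1.symm.trans h2))
    fun k _ => measurable_occurrences hX n (measurableSet_singleton k)]
  exact sum_congr rfl fun k _ => measureReal_occurrences_eq hX hXindep hp n k

theorem hasSum_measureReal_occurrences_lt (hX : ∀ n, Measurable (X n))
    (hXindep : iIndepFun X μ) {p : ℝ} (hp : ∀ n, μ.real {ω | X n ω = a} = p) (hp0 : 0 < p)
    (c : ℕ) : HasSum (fun n => μ.real {ω | occurrences X a n ω < c}) (c / p) := by
  have hp1 : |1 - p| < 1 := hp 0 ▸ abs_one_sub_measureReal_lt_one (hp 0 ▸ hp0)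
  simp_rw [measureReal_occurrences_lt hX hXindep hp]
  convert hasSum_sum fun k (_ : k ∈ range c) => hasSum_choose_mul_pow_mul_pow_sub hp1 k using 1
  simp [div_eq_mul_inv]

-- The count cannot skip `c`, so a path that never hits `c` stays below `c` forever, while
-- `P(occurrences n < c)` is the general term of a convergent series.
theorem ae_exists_occurrences_eq (hX : ∀ n, Measurable (X n))
    (hXindep : iIndepFun X μ) {p : ℝ} (hp : ∀ n, μ.real {ω | X n ω = a} = p) (hp0 : 0 < p)
    (c : ℕ) : ∀ᵐ ω ∂μ, ∃ m, occurrences X a m ω = c := by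
  have hnever :
      ∀ n, {ω | ¬∃ m, occurrences X a m ω = c} ⊆ {ω | occurrences X a n ω < c} :=
    fun n ω hω => lt_of_not_ge fun h =>
      hω ((exists_occurrences_eq_of_le h).imp fun _ hm => hm.2)
  have htends :=
    (hasSum_measureReal_occurrences_lt hX hXindep hp hp0 c).summable.tendsto_atTop_zero
  rw [ae_iff, ← measureReal_eq_zero_iff]
  exact le_antisymm (ge_of_tendsto' htends fun n => measureReal_mono (hnever n)) measureReal_nonneg

theorem measureReal_lt_waitingTime (hX : ∀ n, Measurable (X n))
    (hXindep : iIndepFun X μ) {p : ℝ} (hp : ∀ n, μ.real {ω | X n ω = a} = p) (hp0 : 0 < p)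
    (c n : ℕ) :
    μ.real {ω | n < waitingTime X a c ω} = μ.real {ω | occurrences X a n ω < c} := by
  refine measureReal_congr ?_
  filter_upwards [ae_exists_occurrences_eq hX hXindep hp hp0 c] with ω hω
  exact propext (lt_waitingTime_iff.trans (and_iff_left hω))

theorem integral_waitingTime (hX : ∀ n, Measurable (X n))
    (hXindep : iIndepFun X μ) {p : ℝ} (hp : ∀ n, μ.real {ω | X n ω = a} = p) (hp0 : 0 < p)
    (c : ℕ) : ∫ ω, (waitingTime X a c ω : ℝ) ∂μ = c / p := by
  have hS : HasSum (fun n => 1 * μ.real {ω | n < waitingTime X a c ω}) (c / p) := by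
    simpa only [one_mul, measureReal_lt_waitingTime hX hXindep hp hp0]
      using hasSum_measureReal_occurrences_lt hX hXindep hp hp0 c
  simpa using integral_sum_range_of_hasSum (measurable_waitingTime hX) (fun _ => zero_le_one) hS

theorem hasSum_two_mul_add_one_mul_measureReal_lt_waitingTime
    (hX : ∀ n, Measurable (X n)) (hXindep : iIndepFun X μ) {p : ℝ}
    (hp : ∀ n, μ.real {ω | X n ω = a} = p) (hp0 : 0 < p) (c : ℕ) :
    HasSum (fun n : ℕ => (2 * n + 1) * μ.real {ω | n < waitingTime X a c ω})
      (c * (c + 1) / p ^ 2 - c / p) := by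
  have hp1 : |1 - p| < 1 := hp 0 ▸ abs_one_sub_measureReal_lt_one (hp 0 ▸ hp0)
  have hsum : ∑ k ∈ range c, (2 * ((k + 1) / p ^ 2) - 1 / p) = c * (c + 1) / p ^ 2 - c / p := by
    induction c with
    | zero => simp
    | succ c ih => rw [sum_range_succ, ih]; push_cast; ring
  simp_rw [measureReal_lt_waitingTime hX hXindep hp hp0, measureReal_occurrences_lt hX hXindep hp,
    mul_sum, ← hsum]
  refine hasSum_sum fun k _ => ?_
  rw [funext fun n : ℕ => show (2 * (n : ℝ) + 1) * (n.choose k * p ^ k * (1 - p) ^ (n - k)) =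
    2 * ((n + 1) * (n.choose k * p ^ k * (1 - p) ^ (n - k))) -
      n.choose k * p ^ k * (1 - p) ^ (n - k) by ring]
  exact ((hasSum_add_one_mul_choose_mul_pow_mul_pow_sub hp1 k).mul_left 2).sub
    (hasSum_choose_mul_pow_mul_pow_sub hp1 k)

theorem memLp_waitingTime (hX : ∀ n, Measurable (X n))
    (hXindep : iIndepFun X μ) {p : ℝ} (hp : ∀ n, μ.real {ω | X n ω = a} = p) (hp0 : 0 < p)
    (c : ℕ) : MemLp (fun ω => (waitingTime X a c ω : ℝ)) 2 μ := by
  have hmeas : Measurable fun ω => (waitingTime X a c ω : ℝ) :=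
    measurable_from_top.comp (measurable_waitingTime hX)
  refine (memLp_two_iff_integrable_sq hmeas.aestronglyMeasurable).mpr ?_
  simpa only [sum_range_two_mul_add_one] using integrable_sum_range_of_hasSum
    (measurable_waitingTime hX) (fun _ => by positivity)
    (hasSum_two_mul_add_one_mul_measureReal_lt_waitingTime hX hXindep hp hp0 c)

theorem variance_waitingTime (hX : ∀ n, Measurable (X n))
    (hXindep : iIndepFun X μ) {p : ℝ} (hp : ∀ n, μ.real {ω | X n ω = a} = p) (hp0 : 0 < p)
    (c : ℕ) : Var[fun ω => (waitingTime X a c ω : ℝ); μ] = c * (1 - p) / p ^ 2 := by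
  have hsq : ∫ ω, (waitingTime X a c ω : ℝ) ^ 2 ∂μ = c * (c + 1) / p ^ 2 - c / p := by
    simpa only [sum_range_two_mul_add_one] using integral_sum_range_of_hasSum
      (measurable_waitingTime hX) (fun _ => by positivity)
      (hasSum_two_mul_add_one_mul_measureReal_lt_waitingTime hX hXindep hp hp0 c)
  rw [variance_eq_sub (memLp_waitingTime hX hXindep hp hp0 c),
    integral_waitingTime hX hXindep hp hp0 c]
  simp only [Pi.pow_apply, hsq]
  field_simp
  ring

end Occurrences

theorem stmt_11_general {Ω : Type*} [MeasurableSpace Ω] (μ : Measure Ω) [IsProbabilityMeasure μ]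
    (A : ℕ) (ρ : Fin (A + 1) → ℝ) (hρpos : ∀ a, 0 < ρ a)
    (N : ℕ)
    (C : Fin (A + 1) → ℕ) (hC : ∀ a, (C a : ℝ) = ρ a * N)
    (X : ℕ → Ω → Fin (A + 1)) (hXmeas : ∀ n, Measurable (X n))
    (hXindep : ProbabilityTheory.iIndepFun X μ)
    (hXdist : ∀ n a, μ {ω | X n ω = a} = ENNReal.ofReal (ρ a)) :
    (N : ℝ) - Real.sqrt N *
        Real.sqrt (((A : ℝ) / ((A : ℝ) + 1)) * ∑ a, (1 - ρ a) / ρ a)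
      ≤ ∫ ω, ((Finset.univ.inf' Finset.univ_nonempty (fun a : Fin (A + 1) =>
            sInf {n : ℕ | ((Finset.range n).filter (fun m => X m ω = a)).card = C a}) : ℕ) : ℝ) ∂μ := by
  have hp : ∀ a n, μ.real {ω | X n ω = a} = ρ a := fun a n => by
    rw [measureReal_def, hXdist, ENNReal.toReal_ofReal (hρpos a).le]
  have hmean : ∀ a, ∫ ω, (waitingTime X a (C a) ω : ℝ) ∂μ = N := fun a => by
    rw [integral_waitingTime hXmeas hXindep (hp a) (hρpos a), hC,
      mul_div_cancel_left₀ _ (hρpos a).ne']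
  have hvar :
      ∑ a, Var[fun ω => (waitingTime X a (C a) ω : ℝ); μ] = N * ∑ a, (1 - ρ a) / ρ a := by
    rw [mul_sum]
    refine sum_congr rfl fun a _ => ?_
    rw [variance_waitingTime hXmeas hXindep (hp a) (hρpos a), hC]
    field_simp [(hρpos a).ne']
  have hmin := sub_sqrt_le_integral_inf'
    (fun a => memLp_waitingTime hXmeas hXindep (hp a) (hρpos a) (C a)) hmean
  rw [hvar, Fintype.card_fin, Nat.cast_add_one, add_sub_cancel_right, mul_left_comm,
    Real.sqrt_mul (Nat.cast_nonneg N)] at hmin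
  refine hmin.trans_eq (integral_congr_ae (ae_of_all _ fun ω => ?_))
  exact (apply_inf'_eq_inf'_comp _ _ fun x y => Nat.cast_min x y).symm

/-- Lower bound on the expected onset of the left-over regime. Impressions
are assigned i.i.d. to options `a ∈ A₀ = {0,…,A}` with probabilities `ρ_a`; `N_a` is the
first time option `a` has received `C_a = ρ_a·N` impressions, and `N* = min_a N_a`. Then
`E[N*] ≥ N − √N · K(ρ)` with `K(ρ) = √((A/(A+1)) Σ_a (1−ρ_a)/ρ_a)`. -/
theorem stmt_11 {Ω : Type*} [MeasurableSpace Ω] (μ : Measure Ω) [IsProbabilityMeasure μ]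
    (A : ℕ) (ρ : Fin (A + 1) → ℝ) (hρpos : ∀ a, 0 < ρ a) (hρsum : ∑ a, ρ a = 1)
    (N : ℕ) (hN : 0 < N)
    (C : Fin (A + 1) → ℕ) (hCpos : ∀ a, 0 < C a) (hC : ∀ a, (C a : ℝ) = ρ a * N)
    (X : ℕ → Ω → Fin (A + 1)) (hXmeas : ∀ n, Measurable (X n))
    (hXindep : ProbabilityTheory.iIndepFun X μ)
    (hXdist : ∀ n a, μ {ω | X n ω = a} = ENNReal.ofReal (ρ a)) :
    (N : ℝ) - Real.sqrt N *
        Real.sqrt (((A : ℝ) / ((A : ℝ) + 1)) * ∑ a, (1 - ρ a) / ρ a)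
      ≤ ∫ ω, ((Finset.univ.inf' Finset.univ_nonempty (fun a : Fin (A + 1) =>
            sInf {n : ℕ | ((Finset.range n).filter (fun m => X m ω = a)).card = C a}) : ℕ) : ℝ) ∂μ :=
  stmt_11_general μ A ρ hρpos N C hC X hXmeas hXindep hXdist
end

section
/- Let A₀ = {0, 1, …, A} and ρ_a > 0 with Σ_{a∈A₀} ρ_a = 1. Let N be a positive integer such that C_a := ρ_a·N is a positive integer for every a ∈ A₀, let (X_n)_{n≥1} be i.i.d. A₀-valued random variables with P(X_n = a) = ρ_a, let N_a = inf{ n ≥ 1 : #{ i ≤ n : X_i = a } = C_a } and N* = min_{a∈A₀} N_a. Then for every ε ∈ (0,1): P{ N − N* ≥ εN } ≤ Σ_{a∈A₀} exp( −2 ε² ρ_a² N ). -/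
/-!
Put `M = ⌊(1 - ε) N⌋`. If `N* ≤ (1 - ε) N`, some option `a` has already been chosen `C a` times
among the first `M` draws, and since `C a - M ρ_a ≥ ε ρ_a N`, Hoeffding's inequality bounds the
probability of this by `exp (-2 ε² ρ_a² N)`; a union bound over `a` finishes. The one subtlety is
that `sInf ∅ = 0`, so outcomes where some count never reaches `C a` lie in the event; by the
second Borel–Cantelli lemma they form a null set.
-/

open MeasureTheory ProbabilityTheory Real
open scoped ENNReal NNReal

theorem Nat.le_count_of_sInf_le {p : ℕ → Prop} [DecidablePred p] (hp : {n | p n}.Infinite)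
    {k M : ℕ} (h : sInf {n | Nat.count p n = k} ≤ M) : k ≤ Nat.count p M := by
  have hk : {n | Nat.count p n = k}.Nonempty := Nat.surjective_count_of_infinite_setOfPred hp k
  calc k = Nat.count p (sInf {n | Nat.count p n = k}) := (Nat.sInf_mem hk).symm
    _ ≤ Nat.count p M := Nat.count_monotone p h

section

variable {Ω α : Type*} [MeasurableSpace Ω] {μ : Measure Ω} [MeasurableSpace α]
  [MeasurableSingletonClass α] {X : ℕ → Ω → α}

theorem measureReal_mul_add_le_count_le [DecidableEq α] [IsProbabilityMeasure μ]
    (hX : ∀ n, Measurable (X n)) (hindep : iIndepFun X μ) {a : α} {p : ℝ}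
    (hp : ∀ n, μ.real {ω | X n ω = a} = p)
    (M : ℕ) {t : ℝ} (ht : 0 ≤ t) :
    μ.real {ω | M * p + t ≤ Nat.count (fun i => X i ω = a) M} ≤ exp (-2 * t ^ 2 / M) := by
  set ind : α → ℝ := fun b => if b = a then 1 else 0
  have hind : Measurable ind := measurable_const.ite (measurableSet_singleton a) measurable_const
  have hmean : ∀ n, μ[fun ω => ind (X n ω)] = p := fun n => by
    have : (fun ω => ind (X n ω)) = {ω | X n ω = a}.indicator 1 := by
      ext ω; simp [ind, Set.indicator_apply]
    rw [this]
    exact (integral_indicator_one ((hX n) (measurableSet_singleton a))).trans (hp n)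
  have hsubG : ∀ n < M, HasSubgaussianMGF (fun ω => ind (X n ω) - p) (1 / 4) μ := by
    intro n _
    have h := hasSubgaussianMGF_of_mem_Icc (μ := μ) (X := fun ω => ind (X n ω)) (a := 0) (b := 1)
      (hind.comp (hX n)).aemeasurable
      (ae_of_all _ fun ω => by by_cases h : X n ω = a <;> simp [ind, h])
    rw [hmean n] at h
    convert h using 1
    norm_num
  have hindep' : iIndepFun (fun n ω => ind (X n ω) - p) μ :=
    hindep.comp (fun _ b => ind b - p) fun _ => hind.sub_const p
  have hsum : ∀ ω, ∑ i ∈ Finset.range M, (ind (X i ω) - p)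
      = Nat.count (fun i => X i ω = a) M - M * p := fun ω => by
    simp [ind, Finset.sum_sub_distrib, Finset.sum_boole, Nat.count_eq_card_filter_range]
  calc μ.real {ω | M * p + t ≤ Nat.count (fun i => X i ω = a) M}
      = μ.real {ω | t ≤ ∑ i ∈ Finset.range M, (ind (X i ω) - p)} := by
        simp_rw [hsum]
        congr! 3 with ω
        constructor <;> intro h <;> linarith
    _ ≤ exp (-t ^ 2 / (2 * M * (1 / 4 : ℝ≥0))) :=
        HasSubgaussianMGF.measure_sum_range_ge_le_of_iIndepFun hindep' hsubG ht
    _ = exp (-2 * t ^ 2 / M) := by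
        congr 1
        push_cast
        ring

theorem ae_infinite_setOf_eq [IsProbabilityMeasure μ] (hX : ∀ n, Measurable (X n))
    (hindep : iIndepFun X μ) {a : α} {q : ℝ≥0∞} (hq : ∀ n, μ {ω | X n ω = a} = q)
    (hq0 : q ≠ 0) :
    ∀ᵐ ω ∂μ, {n | X n ω = a}.Infinite := by
  have hmeas : ∀ n, MeasurableSet {ω | X n ω = a} := fun n => hX n (measurableSet_singleton a)
  have hsets : iIndepSet (fun n => {ω | X n ω = a}) μ :=
    (iIndepSet_iff_meas_biInter hmeas).2 fun s =>
      hindep.meas_biInter fun n _ => ⟨{a}, measurableSet_singleton a, rfl⟩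
  have hlimsup := measure_limsup_eq_one hmeas hsets
    (by simp_rw [hq]; exact ENNReal.tsum_const_eq_top_of_ne_zero hq0)
  have hae : ∀ᵐ ω ∂μ, ω ∈ Filter.limsup (fun n => {ω | X n ω = a}) Filter.atTop :=
    (ae_mem_iff_measure_eq (MeasurableSet.measurableSet_limsup hmeas).nullMeasurableSet).2
      (by rw [hlimsup, measure_univ])
  filter_upwards [hae] with ω hω
  exact Nat.frequently_atTop_iff_infinite.1
    (Filter.mem_limsup_iff_frequently_mem (s := fun n => {ω | X n ω = a}).1 hω)

theorem measureReal_le_count_le_exp [DecidableEq α] [IsProbabilityMeasure μ]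
    (hX : ∀ n, Measurable (X n)) (hindep : iIndepFun X μ) {a : α} {p : ℝ}
    (hp : ∀ n, μ.real {ω | X n ω = a} = p)
    {k M : ℕ} {N ε : ℝ} (hk0 : 0 < k) (hk : (k : ℝ) = p * N) (hε : 0 ≤ ε)
    (hM : (M : ℝ) ≤ (1 - ε) * N) :
    μ.real {ω | k ≤ Nat.count (fun i => X i ω = a) M} ≤ exp (-2 * ε ^ 2 * p ^ 2 * N) := by
  -- For `M = 0` the Hoeffding bound degenerates to `exp (-2 t² / 0) = 1`, but the event is empty.
  rcases M.eq_zero_or_pos with rfl | hM0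
  · simp [Nat.pos_iff_ne_zero.1 hk0, exp_nonneg]
  have hp0 : 0 ≤ p := hp 0 ▸ measureReal_nonneg
  have hkR : (0 : ℝ) < k := Nat.cast_pos.2 hk0
  have hN : 0 < N := pos_of_mul_pos_right (hk ▸ hkR) hp0
  have hMR : (0 : ℝ) < M := Nat.cast_pos.2 hM0
  have ht : p * (ε * N) ≤ p * (N - M) := mul_le_mul_of_nonneg_left (by linarith) hp0
  have ht0 : 0 ≤ p * (ε * N) := by positivity
  have hexponent : ε ^ 2 * p ^ 2 * N ≤ (p * (N - M)) ^ 2 / M :=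
    calc ε ^ 2 * p ^ 2 * N = (p * (ε * N)) ^ 2 / N := by field_simp
      _ ≤ (p * (N - M)) ^ 2 / M := by gcongr; nlinarith
  calc μ.real {ω | k ≤ Nat.count (fun i => X i ω = a) M}
      = μ.real {ω | M * p + p * (N - M) ≤ Nat.count (fun i => X i ω = a) M} := by
        congr! 3 with ω
        rw [← Nat.cast_le (α := ℝ), hk]
        ring_nf
    _ ≤ exp (-2 * (p * (N - M)) ^ 2 / M) :=
        measureReal_mul_add_le_count_le hX hindep hp M (ht0.trans ht)
    _ ≤ exp (-2 * ε ^ 2 * p ^ 2 * N) := by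
        rw [exp_le_exp, mul_div_assoc]
        linarith

end

theorem stmt_13_general {Ω : Type*} [MeasurableSpace Ω] (μ : Measure Ω) [IsProbabilityMeasure μ]
    (A : ℕ) (ρ : Fin (A + 1) → ℝ) (hρpos : ∀ a, 0 < ρ a)
    (N : ℕ)
    (C : Fin (A + 1) → ℕ) (hCpos : ∀ a, 0 < C a) (hC : ∀ a, (C a : ℝ) = ρ a * N)
    (X : ℕ → Ω → Fin (A + 1)) (hXmeas : ∀ n, Measurable (X n))
    (hXindep : ProbabilityTheory.iIndepFun X μ)
    (hXdist : ∀ n a, μ {ω | X n ω = a} = ENNReal.ofReal (ρ a))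
    (ε : ℝ) (hε : ε ∈ Set.Ioo (0:ℝ) 1) :
    (μ {ω | ε * N ≤ (N : ℝ) -
        ((Finset.univ.inf' Finset.univ_nonempty (fun a : Fin (A + 1) =>
          sInf {n : ℕ | ((Finset.range n).filter (fun m => X m ω = a)).card = C a}) : ℕ) : ℝ)}).toReal
      ≤ ∑ a, Real.exp (-2 * ε ^ 2 * ρ a ^ 2 * N) := by
  set M := ⌊(1 - ε) * N⌋₊
  have hM : (M : ℝ) ≤ (1 - ε) * N := Nat.floor_le (by nlinarith [hε.2])
  have hreach : ∀ᵐ ω ∂μ, ∀ a, {n | X n ω = a}.Infinite := ae_all_iff.2 fun a =>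
    ae_infinite_setOf_eq hXmeas hXindep (hXdist · a) (ENNReal.ofReal_pos.2 (hρpos a)).ne'
  refine (ENNReal.toReal_mono (measure_ne_top _ _) (measure_mono_ae (t :=
    ⋃ a, {ω | C a ≤ Nat.count (fun i => X i ω = a) M}) ?_)).trans ?_
  · filter_upwards [hreach] with ω hω hbad
    obtain ⟨a, -, ha⟩ := Finset.exists_mem_eq_inf' Finset.univ_nonempty (fun a : Fin (A + 1) =>
      sInf {n : ℕ | ((Finset.range n).filter (fun m => X m ω = a)).card = C a})
    have hNa : ε * N ≤ N - ((sInf {n : ℕ | ((Finset.range n).filter (fun m => X m ω = a)).card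
        = C a} : ℕ) : ℝ) := ha ▸ hbad
    simp only [← Nat.count_eq_card_filter_range] at hNa
    refine Set.mem_iUnion.2 ⟨a, Nat.le_count_of_sInf_le (hω a) (Nat.le_floor ?_)⟩
    linarith
  · refine (measureReal_iUnion_fintype_le _).trans (Finset.sum_le_sum fun a _ => ?_)
    have hρ : ∀ n, μ.real {ω | X n ω = a} = ρ a := fun n => by
      rw [measureReal_def, hXdist, ENNReal.toReal_ofReal (hρpos a).le]
    exact measureReal_le_count_le_exp hXmeas hXindep hρ (hCpos a) (hC a) hε.1.le hM

/-- Exponential tail bound for the length of the left-over regime.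
With the setup of the i.i.d. assignment process (options `a ∈ A₀ = {0,…,A}` with
probabilities `ρ_a`, fulfillment times `N_a`, `N* = min_a N_a`), for every `ε ∈ (0,1)`,
`P{N − N* ≥ εN} ≤ Σ_a exp(−2 ε² ρ_a² N)`. -/
theorem stmt_13 {Ω : Type*} [MeasurableSpace Ω] (μ : Measure Ω) [IsProbabilityMeasure μ]
    (A : ℕ) (ρ : Fin (A + 1) → ℝ) (hρpos : ∀ a, 0 < ρ a) (hρsum : ∑ a, ρ a = 1)
    (N : ℕ) (hN : 0 < N)
    (C : Fin (A + 1) → ℕ) (hCpos : ∀ a, 0 < C a) (hC : ∀ a, (C a : ℝ) = ρ a * N)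
    (X : ℕ → Ω → Fin (A + 1)) (hXmeas : ∀ n, Measurable (X n))
    (hXindep : ProbabilityTheory.iIndepFun X μ)
    (hXdist : ∀ n a, μ {ω | X n ω = a} = ENNReal.ofReal (ρ a))
    (ε : ℝ) (hε : ε ∈ Set.Ioo (0:ℝ) 1) :
    (μ {ω | ε * N ≤ (N : ℝ) -
        ((Finset.univ.inf' Finset.univ_nonempty (fun a : Fin (A + 1) =>
          sInf {n : ℕ | ((Finset.range n).filter (fun m => X m ω = a)).card = C a}) : ℕ) : ℝ)}).toReal
      ≤ ∑ a, Real.exp (-2 * ε ^ 2 * ρ a ^ 2 * N) :=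
  stmt_13_general μ A ρ hρpos N C hCpos hC X hXmeas hXindep hXdist ε hε
end

section
/- For every ρ ∈ (0,1): 1 − ρ ≥ (3/2) · ρ · (log ρ)², i.e. the ratio (1 − ρ)/(ρ (log ρ)²) is bounded below by 3/2 on (0,1). -/
/-!
Substituting `ρ = exp (-t)` with `t ≥ 0` turns the inequality into `1 + (3/2) t² ≤ exp t`, and
the degree-five Taylor polynomial of `exp` already dominates `1 + (3/2) t²` on `[0, ∞)`.
-/

open Real

theorem one_add_three_halves_mul_sq_le_exp {t : ℝ} (ht : 0 ≤ t) : 1 + 3 / 2 * t ^ 2 ≤ exp t := by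
  have taylor := sum_le_exp_of_nonneg ht 6
  simp only [Finset.sum_range_succ, Finset.sum_range_zero, Nat.factorial] at taylor
  norm_num at taylor
  nlinarith [sq_nonneg (t ^ 2 + 5 / 2 * t - 8), sq_nonneg (t - 27 / 20), sq_nonneg (t - 1),
    mul_nonneg ht (sq_nonneg (t - 2))]

theorem three_halves_mul_mul_log_sq_le_one_sub {ρ : ℝ} (hρ₀ : 0 < ρ) (hρ₁ : ρ ≤ 1) :
    3 / 2 * ρ * log ρ ^ 2 ≤ 1 - ρ := by
  have h := one_add_three_halves_mul_sq_le_exp (neg_nonneg.mpr (log_nonpos hρ₀.le hρ₁))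
  rw [exp_neg, exp_log hρ₀, neg_sq, ← one_div, le_div_iff₀ hρ₀] at h
  linarith

/-- For every `ρ ∈ (0,1)`, `1 − ρ ≥ (3/2)·ρ·(log ρ)²`, i.e. the relative
efficiency `(1 − ρ)/(ρ (log ρ)²)` is bounded below by `3/2` on `(0,1)`. -/
theorem stmt_18 : ∀ ρ ∈ Set.Ioo (0:ℝ) 1, (3 / 2 : ℝ) * ρ * Real.log ρ ^ 2 ≤ 1 - ρ :=
  fun _ hρ => three_halves_mul_mul_log_sq_le_one_sub hρ.1 hρ.2.le
end

section
/- Let Φ denote the cumulative distribution function of the standard normal distribution on ℝ. Then for every x ∈ ℝ: 4 · Φ(x) · (1 − Φ(x)) · exp(x²) ≥ 1, with equality if and only if x = 0. -/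
/-!
Write `g t = exp (-t²/2)` and `G x = ∫₀ˣ g`, so that `Φ x = 1/2 + G x / √(2π)` and
`4 Φ (1 - Φ) exp (x²) - 1 = (2/π) exp (x²) D x` with `D x = π/2 (1 - exp (-x²)) - G x ²`.
It remains to show `D > 0` away from `0`. As `D` is even with `D 0 = 0` and `D → 0` at `∞`,
this follows from the sign pattern of `D' = g K`, `K x = π x g x - 2 G x`: on `(0, ∞)` the
function `K` is first positive and then negative (possibly never), because `K 0 = 0` and
`K' = g (π - 2 - π x²)` changes sign once. So `D` rises from `0` and then falls towards `0`.
-/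

open Real MeasureTheory Set Filter Topology

theorem StrictAntiOn.lt_of_tendsto_atTop {f : ℝ → ℝ} {a l : ℝ} (hf : StrictAntiOn f (Ici a))
    (hlim : Tendsto f atTop (𝓝 l)) : l < f a := by
  have hle : l ≤ f (a + 1) :=
    le_of_tendsto hlim <| (eventually_ge_atTop (a + 1)).mono fun y hy =>
      hf.antitoneOn (mem_Ici.2 (by linarith)) (mem_Ici.2 (by linarith)) hy
  exact hle.trans_lt (hf (mem_Ici.2 le_rfl) (mem_Ici.2 (by linarith)) (by linarith))

noncomputable section

def gaussKernel (t : ℝ) : ℝ := exp (-(t ^ 2) / 2)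

lemma gaussKernel_eq_exp_neg_mul_sq (t : ℝ) : gaussKernel t = exp (-(1 / 2) * t ^ 2) := by
  rw [gaussKernel]; ring_nf

lemma gaussKernel_pos (t : ℝ) : 0 < gaussKernel t := exp_pos _

lemma gaussKernel_neg (t : ℝ) : gaussKernel (-t) = gaussKernel t := by
  rw [gaussKernel, neg_sq, gaussKernel]

lemma gaussKernel_sq (t : ℝ) : gaussKernel t ^ 2 = exp (-(t ^ 2)) := by
  rw [gaussKernel, ← exp_nat_mul]; ring_nf

lemma continuous_gaussKernel : Continuous gaussKernel := by
  unfold gaussKernel; fun_prop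

lemma integrable_gaussKernel : Integrable gaussKernel := by
  rw [show gaussKernel = _ from funext gaussKernel_eq_exp_neg_mul_sq]
  exact integrable_exp_neg_mul_sq (by norm_num)

lemma hasDerivAt_gaussKernel (x : ℝ) : HasDerivAt gaussKernel (-x * gaussKernel x) x := by
  refine ((hasDerivAt_pow 2 x).neg.div_const 2).exp.congr_deriv ?_
  simp only [gaussKernel, Pi.neg_apply]; push_cast; ring

lemma integral_Ioi_gaussKernel : ∫ t in Ioi 0, gaussKernel t = √(2 * π) / 2 := by
  simp only [gaussKernel_eq_exp_neg_mul_sq, integral_gaussian_Ioi]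
  rw [div_div_eq_mul_div, div_one, mul_comm]

lemma integral_Iic_zero_gaussKernel : ∫ t in Iic 0, gaussKernel t = √(2 * π) / 2 := by
  rw [← integral_Ioi_gaussKernel, ← neg_zero, ← integral_comp_neg_Iic]
  simp only [gaussKernel_neg, neg_zero]

def gaussIntegral (x : ℝ) : ℝ := ∫ t in (0 : ℝ)..x, gaussKernel t

lemma gaussIntegral_zero : gaussIntegral 0 = 0 := intervalIntegral.integral_same

lemma gaussIntegral_neg (x : ℝ) : gaussIntegral (-x) = -gaussIntegral x := by
  rw [gaussIntegral, ← neg_zero, ← intervalIntegral.integral_comp_neg,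
    intervalIntegral.integral_symm]
  simp only [gaussKernel_neg, gaussIntegral]

lemma hasDerivAt_gaussIntegral (x : ℝ) : HasDerivAt gaussIntegral (gaussKernel x) x :=
  (continuous_gaussKernel.integral_hasStrictDerivAt 0 x).hasDerivAt

lemma tendsto_gaussIntegral_atTop : Tendsto gaussIntegral atTop (𝓝 (√(2 * π) / 2)) := by
  rw [← integral_Ioi_gaussKernel]
  exact intervalIntegral_tendsto_integral_Ioi 0 integrable_gaussKernel.integrableOn tendsto_id

lemma integral_Iic_gaussKernel (x : ℝ) :
    ∫ t in Iic x, gaussKernel t = √(2 * π) / 2 + gaussIntegral x := by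
  rw [← integral_Iic_zero_gaussKernel, gaussIntegral,
    ← intervalIntegral.integral_Iic_sub_Iic integrable_gaussKernel.integrableOn
      integrable_gaussKernel.integrableOn]
  ring

def stdNormalCDF (x : ℝ) : ℝ := (√(2 * π))⁻¹ * ∫ t in Iic x, gaussKernel t

lemma stdNormalCDF_eq (x : ℝ) : stdNormalCDF x = 1 / 2 + gaussIntegral x / √(2 * π) := by
  have hc : √(2 * π) ≠ 0 := (sqrt_pos.2 (by positivity)).ne'
  rw [stdNormalCDF, integral_Iic_gaussKernel]
  field_simp

/-- `π/2 (1 - exp (-x²))` is the integral of `exp (-(s² + t²)/2)` over the quarter disc of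
radius `√2 |x|`, which contains the square `[0, x]²` carrying `gaussIntegral x ^ 2`. -/
def gaussDefect (x : ℝ) : ℝ := π / 2 * (1 - exp (-(x ^ 2))) - gaussIntegral x ^ 2

lemma four_mul_stdNormalCDF_mul_exp_sub_one (x : ℝ) :
    4 * stdNormalCDF x * (1 - stdNormalCDF x) * exp (x ^ 2) - 1 =
      2 / π * exp (x ^ 2) * gaussDefect x := by
  have hsq : √(2 * π) ^ 2 = 2 * π := sq_sqrt (by positivity)
  have hexp : exp (x ^ 2) * exp (-(x ^ 2)) = 1 := by rw [← exp_add, add_neg_cancel, exp_zero]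
  have hc : √(2 * π) ≠ 0 := (sqrt_pos.2 (by positivity)).ne'
  rw [stdNormalCDF_eq, gaussDefect]
  field_simp
  linear_combination (4 * π * √(2 * π) ^ 2) * hexp +
    (8 * gaussIntegral x ^ 2 * exp (x ^ 2)) * hsq

def defectSlope (x : ℝ) : ℝ := π * x * gaussKernel x - 2 * gaussIntegral x

lemma defectSlope_zero : defectSlope 0 = 0 := by simp [defectSlope, gaussIntegral_zero]

lemma hasDerivAt_defectSlope (x : ℝ) :
    HasDerivAt defectSlope (gaussKernel x * (π - 2 - π * x ^ 2)) x := by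
  have h := (((hasDerivAt_id x).const_mul π).mul (hasDerivAt_gaussKernel x)).sub
    ((hasDerivAt_gaussIntegral x).const_mul 2)
  refine h.congr_deriv ?_
  simp only [id]; ring

lemma continuous_defectSlope : Continuous defectSlope :=
  continuous_iff_continuousAt.2 fun x => (hasDerivAt_defectSlope x).continuousAt

section TurningPoint

local notation "r₀" => √(1 - 2 / π)

private lemma sq_turningPoint : r₀ ^ 2 = 1 - 2 / π :=
  sq_sqrt <| sub_nonneg.2 <| (div_le_one pi_pos).2 (by linarith [pi_gt_three])

private lemma turningPoint_pos : 0 < r₀ :=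
  sqrt_pos.2 <| sub_pos.2 <| (div_lt_one pi_pos).2 (by linarith [pi_gt_three])

private lemma pi_mul_sq_turningPoint : π * r₀ ^ 2 = π - 2 := by
  rw [sq_turningPoint]; field_simp

lemma strictMonoOn_defectSlope : StrictMonoOn defectSlope (Icc 0 r₀) := by
  refine strictMonoOn_of_deriv_pos (convex_Icc _ _) continuous_defectSlope.continuousOn ?_
  intro x hx
  rw [interior_Icc] at hx
  rw [(hasDerivAt_defectSlope x).deriv]
  refine mul_pos (gaussKernel_pos x) ?_
  have : x ^ 2 < r₀ ^ 2 := pow_lt_pow_left₀ hx.2 hx.1.le two_ne_zero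
  nlinarith [pi_mul_sq_turningPoint, pi_pos]

lemma strictAntiOn_defectSlope : StrictAntiOn defectSlope (Ici r₀) := by
  refine strictAntiOn_of_deriv_neg (convex_Ici _) continuous_defectSlope.continuousOn ?_
  intro x hx
  rw [interior_Ici] at hx
  rw [(hasDerivAt_defectSlope x).deriv]
  refine mul_neg_of_pos_of_neg (gaussKernel_pos x) ?_
  have : r₀ ^ 2 < x ^ 2 := pow_lt_pow_left₀ hx turningPoint_pos.le two_ne_zero
  nlinarith [pi_mul_sq_turningPoint, pi_pos]

lemma defectSlope_neg_of_nonpos {y z : ℝ} (hy : 0 < y) (hKy : defectSlope y ≤ 0) (hyz : y < z) :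
    defectSlope z < 0 := by
  have hry : r₀ < y := by
    by_contra! hyr
    have := strictMonoOn_defectSlope (left_mem_Icc.2 turningPoint_pos.le) ⟨hy.le, hyr⟩ hy
    linarith [defectSlope_zero]
  exact (strictAntiOn_defectSlope hry.le (hry.trans hyz).le hyz).trans_le hKy

end TurningPoint

lemma hasDerivAt_gaussDefect (x : ℝ) :
    HasDerivAt gaussDefect (gaussKernel x * defectSlope x) x := by
  have h := ((((hasDerivAt_pow 2 x).neg.exp).const_sub 1).const_mul (π / 2)).sub
    ((hasDerivAt_gaussIntegral x).pow 2)
  refine h.congr_deriv ?_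
  simp only [defectSlope, Pi.neg_apply, ← gaussKernel_sq]
  push_cast; ring

lemma continuous_gaussDefect : Continuous gaussDefect :=
  continuous_iff_continuousAt.2 fun x => (hasDerivAt_gaussDefect x).continuousAt

lemma gaussDefect_zero : gaussDefect 0 = 0 := by simp [gaussDefect, gaussIntegral_zero]

lemma gaussDefect_neg (x : ℝ) : gaussDefect (-x) = gaussDefect x := by
  rw [gaussDefect, gaussIntegral_neg, neg_sq, neg_sq, gaussDefect]

lemma tendsto_gaussDefect_atTop : Tendsto gaussDefect atTop (𝓝 0) := by
  have hexp : Tendsto (fun x : ℝ => exp (-(x ^ 2))) atTop (𝓝 0) :=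
    tendsto_exp_atBot.comp <| tendsto_neg_atBot_iff.2 <| tendsto_pow_atTop two_ne_zero
  show Tendsto (fun x => π / 2 * (1 - exp (-(x ^ 2))) - gaussIntegral x ^ 2) atTop (𝓝 0)
  convert ((hexp.const_sub 1).const_mul (π / 2)).sub (tendsto_gaussIntegral_atTop.pow 2) using 2
  rw [div_pow, sq_sqrt (by positivity)]; ring

lemma gaussDefect_pos_of_pos {x : ℝ} (hx : 0 < x) : 0 < gaussDefect x := by
  by_cases hK : ∀ y ∈ Ioo 0 x, 0 < defectSlope y
  · have hmono : StrictMonoOn gaussDefect (Icc 0 x) := by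
      refine strictMonoOn_of_deriv_pos (convex_Icc _ _) continuous_gaussDefect.continuousOn ?_
      intro y hy
      rw [interior_Icc] at hy
      rw [(hasDerivAt_gaussDefect y).deriv]
      exact mul_pos (gaussKernel_pos y) (hK y hy)
    simpa [gaussDefect_zero] using
      hmono (left_mem_Icc.2 hx.le) (right_mem_Icc.2 hx.le) hx
  · push Not at hK
    obtain ⟨y, ⟨hy, hyx⟩, hKy⟩ := hK
    have hanti : StrictAntiOn gaussDefect (Ici x) := by
      refine strictAntiOn_of_deriv_neg (convex_Ici _) continuous_gaussDefect.continuousOn ?_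
      intro z hz
      rw [interior_Ici] at hz
      rw [(hasDerivAt_gaussDefect z).deriv]
      exact mul_neg_of_pos_of_neg (gaussKernel_pos z)
        (defectSlope_neg_of_nonpos hy hKy (hyx.trans hz))
    exact hanti.lt_of_tendsto_atTop tendsto_gaussDefect_atTop

lemma gaussDefect_pos_of_ne_zero {x : ℝ} (hx : x ≠ 0) : 0 < gaussDefect x := by
  rcases hx.lt_or_gt with hneg | hpos
  · rw [← neg_neg x, gaussDefect_neg]
    exact gaussDefect_pos_of_pos (neg_pos.2 hneg)
  · exact gaussDefect_pos_of_pos hpos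

lemma gaussDefect_nonneg (x : ℝ) : 0 ≤ gaussDefect x := by
  rcases eq_or_ne x 0 with rfl | hx
  · exact gaussDefect_zero.ge
  · exact (gaussDefect_pos_of_ne_zero hx).le

lemma gaussDefect_eq_zero_iff {x : ℝ} : gaussDefect x = 0 ↔ x = 0 :=
  ⟨fun h => by_contra fun hx => (gaussDefect_pos_of_ne_zero hx).ne' h,
    fun h => h ▸ gaussDefect_zero⟩

end

/-- For the standard normal cdf `Φ`, `4·Φ(x)·(1 − Φ(x))·exp(x²) ≥ 1` for all
real `x`, with equality if and only if `x = 0`. -/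
theorem stmt_19 (Φ : ℝ → ℝ)
    (hΦ : ∀ x : ℝ, Φ x =
      (Real.sqrt (2 * Real.pi))⁻¹ * ∫ t in Set.Iic x, Real.exp (-(t ^ 2) / 2)) :
    ∀ x : ℝ,
      1 ≤ 4 * Φ x * (1 - Φ x) * Real.exp (x ^ 2) ∧
      (4 * Φ x * (1 - Φ x) * Real.exp (x ^ 2) = 1 ↔ x = 0) := by
  intro x
  have hΦx : Φ x = stdNormalCDF x := hΦ x
  have hcoef : 0 < 2 / π * exp (x ^ 2) := by positivity
  have hid := four_mul_stdNormalCDF_mul_exp_sub_one x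
  rw [hΦx]
  refine ⟨?_, ?_⟩
  · linarith [mul_nonneg hcoef.le (gaussDefect_nonneg x)]
  · rw [← sub_eq_zero, hid, mul_eq_zero, or_iff_right hcoef.ne', gaussDefect_eq_zero_iff]
end
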